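/- arXiv:math/0508604 — 4 statements merged into one kernel-verified Lean document; each statement's English description precedes it below -/
import Mathlib

section
/- If the characteristic function (ξ,η) ↦ E[exp(i ξ X + i η X²)] lies in L^v(ℝ²) for some v > 1, then the distribution function of X is continuous (X has no atoms). -/
open scoped ProbabilityTheory
open MeasureTheory Real Filter

noncomputable def sincK (T a : ℝ) : ℝ := if a = 0 then 1 else Real.sin (T*a)/(T*a)

lemma sincK_meas (T : ℝ) : Measurable (sincK T) := by
  unfold sincK
  exact Measurable.ite (measurableSet_eq_fun measurable_id measurable_const) measurable_const
    ((Real.measurable_sin.comp (measurable_const.mul measurable_id)).div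
      (measurable_const.mul measurable_id))

lemma sincK_abs_le_one (T a : ℝ) : |sincK T a| ≤ 1 := by
  unfold sincK
  split_ifs with h
  · simp
  · rw [abs_div]
    rcases eq_or_ne (T*a) 0 with h0 | h0
    · simp [h0]
    · rw [div_le_one (abs_pos.mpr h0)]
      exact Real.abs_sin_le_abs

lemma sincK_tendsto {a : ℝ} (ha : a ≠ 0) :
    Tendsto (fun T => sincK T a) atTop (nhds 0) := by
  have hb : Tendsto (fun T : ℝ => 1 / (T * |a|)) atTop (nhds 0) := by
    apply Tendsto.div_atTop tendsto_const_nhds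
    exact Tendsto.atTop_mul_const (abs_pos.mpr ha) tendsto_id
  apply squeeze_zero_norm' _ hb
  filter_upwards [eventually_gt_atTop 0] with T hT
  have hTa : T * a ≠ 0 := mul_ne_zero (ne_of_gt hT) ha
  rw [sincK, if_neg ha, Real.norm_eq_abs, abs_div]
  rw [div_le_div_iff₀ (abs_pos.mpr hTa) (by positivity)]
  calc |Real.sin (T*a)| * (T * |a|) ≤ 1 * (T * |a|) := by
        apply mul_le_mul_of_nonneg_right _ (by positivity)
        exact abs_le.mpr ⟨Real.neg_one_le_sin _, Real.sin_le_one _⟩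
    _ = 1 * |T * a| := by rw [abs_mul, abs_of_pos hT]

lemma integral_exp_Ioc {T : ℝ} (hT : 0 < T) (a : ℝ) :
    ∫ t in Set.Ioc (-T) T, Complex.exp (Complex.I * ((t * a : ℝ) : ℂ)) =
      ((2 * T * sincK T a : ℝ) : ℂ) := by
  rw [← intervalIntegral.integral_of_le (by linarith : -T ≤ T)]
  rcases eq_or_ne a 0 with rfl | ha
  · simp only [sincK, if_pos rfl, Complex.ofReal_zero, mul_zero, Complex.ofReal_mul]
    norm_num
    ring
  · have h1 : ∀ t : ℝ, Complex.exp (Complex.I * ((t * a : ℝ) : ℂ)) =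
        Complex.exp ((Complex.I * a) * t) := by intro t; push_cast; ring_nf
    simp_rw [h1]
    rw [integral_exp_mul_complex (by simp [Complex.I_ne_zero, ha] : (Complex.I * a) ≠ 0)]
    rw [div_eq_iff (by simp [Complex.I_ne_zero, ha] : (Complex.I * a) ≠ 0)]
    have h2 : Complex.exp (Complex.I * a * T) - Complex.exp (Complex.I * a * ((-T : ℝ) : ℂ)) =
        2 * Complex.sin (a * T) * Complex.I := by
      push_cast
      rw [Complex.sin]
      have e1 : Complex.exp (Complex.I * a * T) = Complex.exp (a * T * Complex.I) := by
        congr 1; ring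
      have e2 : Complex.exp (Complex.I * a * -T) = Complex.exp (-(a * T) * Complex.I) := by
        congr 1; ring
      rw [e1, e2]
      linear_combination (Complex.exp (a * T * Complex.I) - Complex.exp (-(a * T) * Complex.I)) *
        Complex.I_sq
    rw [h2]
    rw [sincK, if_neg ha]
    have hsin : Complex.sin ((a : ℂ) * T) = ((Real.sin (T * a) : ℝ) : ℂ) := by
      rw [mul_comm ((a:ℂ)) (T:ℂ)]
      push_cast [Complex.ofReal_sin]
      norm_cast
    rw [hsin]
    have hTa' : (T : ℂ) * a ≠ 0 :=
      mul_ne_zero (by exact_mod_cast ne_of_gt hT) (by exact_mod_cast ha)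
    push_cast
    field_simp
    have hT0 : (T:ℂ) ≠ 0 := by exact_mod_cast ne_of_gt hT
    have ha0 : (a:ℂ) ≠ 0 := by exact_mod_cast ha
    symm
    calc _ = Complex.sin (T*a) * ((T:ℂ)*(T:ℂ)⁻¹) * ((a:ℂ)*(a:ℂ)⁻¹) := by ring
      _ = _ := by rw [mul_inv_cancel₀ hT0, mul_inv_cancel₀ ha0]; ring

lemma integral_ofReal'' {α : Type*} [MeasurableSpace α] {μ : Measure α} (f : α → ℝ) :
    ∫ x, ((f x : ℝ) : ℂ) ∂μ = ((∫ x, f x ∂μ : ℝ) : ℂ) := integral_ofReal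

lemma pow_two_le_aux {n ε v : ℝ} (hn0 : 0 ≤ n) (hn1 : n ≤ 1) (hε : 0 < ε) (hv : 0 < v) :
    n ^ 2 ≤ ε ^ 2 + (max 1 (ε ^ (2 - v))) * n ^ v := by
  set C := max 1 (ε ^ (2 - v)) with hC
  have hC1 : (1:ℝ) ≤ C := le_max_left _ _
  have hnv : 0 ≤ n ^ v := Real.rpow_nonneg hn0 _
  rcases le_or_gt n ε with hle | hlt
  · have : n ^ 2 ≤ ε ^ 2 := pow_le_pow_left₀ hn0 hle 2
    nlinarith
  · have hn : 0 < n := lt_trans hε hlt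
    have key : n ^ (2:ℝ) = n ^ v * n ^ (2 - v) := by
      rw [← Real.rpow_add hn]; ring_nf
    have h2v : n ^ (2 - v) ≤ C := by
      rcases le_or_gt v 2 with hv2 | hv2
      · exact le_trans (Real.rpow_le_one hn0 hn1 (by linarith)) hC1
      · exact le_trans (Real.rpow_le_rpow_of_nonpos hε hlt.le (by linarith)) (le_max_right _ _)
    have : n ^ (2:ℝ) ≤ C * n ^ v := by
      rw [key, mul_comm]
      exact mul_le_mul_of_nonneg_right h2v hnv
    rw [← Real.rpow_natCast n 2]
    push_cast
    nlinarith [sq_nonneg ε]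

/-- If the characteristic function of (X, X²) lies in L^v(ℝ²) for some v > 1, then
the distribution of X has no atoms. -/
theorem stmt1 {Ω : Type*} [MeasureSpace Ω] [IsProbabilityMeasure (ℙ : Measure Ω)]
    (X : Ω → ℝ) (hX : Measurable X)
    (h : ∃ v > (1 : ℝ), Integrable (fun p : ℝ × ℝ =>
      ‖∫ ω, Complex.exp (Complex.I * ((p.1 * X ω + p.2 * (X ω) ^ 2 : ℝ) : ℂ))‖ ^ v)
      (volume : Measure (ℝ × ℝ))) :
    ∀ x : ℝ, ℙ {ω | X ω = x} = 0 := by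
  obtain ⟨v, hv1, hInt⟩ := h
  have hv0 : 0 < v := lt_trans one_pos hv1
  intro x
  set φ : ℝ × ℝ → ℂ :=
    fun p => ∫ ω, Complex.exp (Complex.I * ((p.1 * X ω + p.2 * (X ω) ^ 2 : ℝ) : ℂ)) with hφ
  set P2 : Measure (Ω × Ω) := (ℙ : Measure Ω).prod ℙ with hP2
  haveI : IsProbabilityMeasure P2 := by rw [hP2]; infer_instance
  set d : Ω × Ω → ℝ × ℝ := fun y => (X y.1 - X y.2, X y.1 ^ 2 - X y.2 ^ 2) with hd
  set D : Set (Ω × Ω) := {y | X y.1 = X y.2} with hD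
  have hDmeas : MeasurableSet D :=
    measurableSet_eq_fun (hX.comp measurable_fst) (hX.comp measurable_snd)
  set A : ℝ → ℝ := fun T => ∫ y, sincK T (d y).1 * sincK T (d y).2 ∂P2 with hA
  set box : ℝ → Set (ℝ × ℝ) := fun T => Set.Ioc (-T) T ×ˢ Set.Ioc (-T) T with hbox
  -- strong measurability of φ
  have hφ_sm : StronglyMeasurable φ := by
    have hm : StronglyMeasurable (fun q : (ℝ × ℝ) × Ω =>
        Complex.exp (Complex.I * ((q.1.1 * X q.2 + q.1.2 * (X q.2) ^ 2 : ℝ) : ℂ))) := by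
      apply Measurable.stronglyMeasurable
      apply Complex.measurable_exp.comp
      apply Measurable.const_mul
      apply Complex.measurable_ofReal.comp
      exact ((measurable_fst.fst).mul (hX.comp measurable_snd)).add
        ((measurable_fst.snd).mul ((hX.comp measurable_snd).pow_const 2))
    exact hm.integral_prod_right'
  have hφ_le : ∀ p, ‖φ p‖ ≤ 1 := by
    intro p
    calc ‖φ p‖ ≤ ∫ ω, ‖Complex.exp (Complex.I * ((p.1 * X ω + p.2 * (X ω) ^ 2 : ℝ) : ℂ))‖ :=
          norm_integral_le_integral_norm _
      _ = ∫ (_ : Ω), (1:ℝ) := by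
          congr 1; funext ω
          rw [Complex.norm_exp]
          simp [Complex.mul_re]
          exact Or.inr (by simp [pow_two, Complex.mul_im])
      _ = 1 := by simp
  -- the key identity
  have hd1 : Measurable (fun y : Ω × Ω => (d y).1) := by
    simp only [hd]
    exact (hX.comp measurable_fst).sub (hX.comp measurable_snd)
  have hd2 : Measurable (fun y : Ω × Ω => (d y).2) := by
    simp only [hd]
    exact ((hX.comp measurable_fst).pow_const 2).sub ((hX.comp measurable_snd).pow_const 2)
  have key : ∀ T : ℝ, 0 < T → ∫ p in box T, ‖φ p‖ ^ 2 = (4 * T ^ 2) * A T := by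
    intro T hT
    have hboxfin : volume (box T) < ⊤ := by
      rw [hbox]
      simp only
      rw [show (volume : Measure (ℝ × ℝ)) = ((volume : Measure ℝ).prod volume) from
        MeasureTheory.Measure.volume_eq_prod ℝ ℝ]
      rw [Measure.prod_prod, Real.volume_Ioc]
      exact ENNReal.mul_lt_top ENNReal.ofReal_lt_top ENNReal.ofReal_lt_top
    haveI : IsFiniteMeasure ((volume : Measure (ℝ × ℝ)).restrict (box T)) :=
      ⟨by rwa [Measure.restrict_apply_univ]⟩
    have hE : ∀ r : ℝ × ℝ, ∫ p in box T,
        Complex.exp (Complex.I * ((p.1 * r.1 + p.2 * r.2 : ℝ) : ℂ))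
        = (((2 * T * sincK T r.1) * (2 * T * sincK T r.2) : ℝ) : ℂ) := by
      intro r
      have hsplit : ∀ p : ℝ × ℝ, Complex.exp (Complex.I * ((p.1 * r.1 + p.2 * r.2 : ℝ) : ℂ)) =
          Complex.exp (Complex.I * ((p.1 * r.1 : ℝ) : ℂ)) *
            Complex.exp (Complex.I * ((p.2 * r.2 : ℝ) : ℂ)) := by
        intro p; rw [← Complex.exp_add]; push_cast; ring_nf
      simp_rw [hsplit]
      rw [hbox]
      simp only
      rw [show (volume : Measure (ℝ × ℝ)) = ((volume : Measure ℝ).prod volume) from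
        MeasureTheory.Measure.volume_eq_prod ℝ ℝ]
      rw [← Measure.prod_restrict]
      rw [integral_prod_mul (fun t : ℝ => Complex.exp (Complex.I * ((t * r.1 : ℝ) : ℂ)))
        (fun t : ℝ => Complex.exp (Complex.I * ((t * r.2 : ℝ) : ℂ)))]
      rw [integral_exp_Ioc hT r.1, integral_exp_Ioc hT r.2]
      push_cast
      ring
    have hmul : ∀ p : ℝ × ℝ, φ p * (starRingEnd ℂ) (φ p) =
        ∫ y, Complex.exp (Complex.I * ((p.1 * (d y).1 + p.2 * (d y).2 : ℝ) : ℂ)) ∂P2 := by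
      intro p
      have hconj : (starRingEnd ℂ) (φ p) =
          ∫ ω, Complex.exp (-(Complex.I * ((p.1 * X ω + p.2 * (X ω) ^ 2 : ℝ) : ℂ))) := by
        rw [hφ]
        simp only
        rw [← integral_conj]
        congr 1; funext ω
        rw [← Complex.exp_conj]
        congr 1
        simp
      rw [hconj, hφ, hP2]
      simp only
      rw [← integral_prod_mul (fun ω : Ω =>
        Complex.exp (Complex.I * ((p.1 * X ω + p.2 * (X ω) ^ 2 : ℝ) : ℂ)))
        (fun ω : Ω =>
        Complex.exp (-(Complex.I * ((p.1 * X ω + p.2 * (X ω) ^ 2 : ℝ) : ℂ))))]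
      congr 1; funext y
      rw [← Complex.exp_add]
      congr 1
      try simp only [hd]
      push_cast
      ring
    have hum : Measurable (Function.uncurry (fun (p : ℝ × ℝ) (y : Ω × Ω) =>
        Complex.exp (Complex.I * ((p.1 * (d y).1 + p.2 * (d y).2 : ℝ) : ℂ)))) := by
      apply Complex.measurable_exp.comp
      apply Measurable.const_mul
      apply Complex.measurable_ofReal.comp
      exact (measurable_fst.fst.mul (hd1.comp measurable_snd)).add
        (measurable_fst.snd.mul (hd2.comp measurable_snd))
    have hint : Integrable (Function.uncurry (fun (p : ℝ × ℝ) (y : Ω × Ω) =>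
        Complex.exp (Complex.I * ((p.1 * (d y).1 + p.2 * (d y).2 : ℝ) : ℂ))))
        (((volume : Measure (ℝ × ℝ)).restrict (box T)).prod P2) := by
      apply Integrable.mono' (integrable_const (1 : ℝ)) hum.aestronglyMeasurable
      filter_upwards with z
      rw [Function.uncurry, Complex.norm_exp]
      have hre : (Complex.I * ((z.1.1 * (d z.2).1 + z.1.2 * (d z.2).2 : ℝ) : ℂ)).re = 0 := by
        simp [Complex.mul_re]
      rw [hre, Real.exp_zero]
    have hswap := MeasureTheory.integral_integral_swap hint
    have hchain : ∫ p in box T, ((‖φ p‖ ^ 2 : ℝ) : ℂ) =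
        (((4 * T ^ 2) * A T : ℝ) : ℂ) := by
      calc ∫ p in box T, ((‖φ p‖ ^ 2 : ℝ) : ℂ)
          = ∫ p in box T, φ p * (starRingEnd ℂ) (φ p) := by
            congr 1; funext p
            rw [Complex.mul_conj, Complex.normSq_eq_norm_sq]
        _ = ∫ p in box T, ∫ y,
              Complex.exp (Complex.I * ((p.1 * (d y).1 + p.2 * (d y).2 : ℝ) : ℂ)) ∂P2 := by
            congr 1; funext p; exact hmul p
        _ = ∫ y, (∫ p in box T,
              Complex.exp (Complex.I * ((p.1 * (d y).1 + p.2 * (d y).2 : ℝ) : ℂ))) ∂P2 :=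
            hswap
        _ = ∫ y, ((4 * T ^ 2 * (sincK T (d y).1 * sincK T (d y).2) : ℝ) : ℂ) ∂P2 := by
            congr 1; funext y
            rw [hE (d y)]
            push_cast
            ring
        _ = (((4 * T ^ 2) * A T : ℝ) : ℂ) := by
            rw [integral_ofReal'', hA]
            norm_cast
            rw [integral_const_mul]
    rw [integral_ofReal''] at hchain
    exact_mod_cast hchain
  -- DCT
  have hAlim : Tendsto A atTop (nhds ((P2 D).toReal)) := by
    have h1 : Tendsto A atTop (nhds (∫ y, D.indicator (1 : (Ω × Ω) → ℝ) y ∂P2)) := by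
      rw [hA]
      apply tendsto_integral_filter_of_dominated_convergence (fun _ => (1:ℝ))
      · filter_upwards with T
        exact (((sincK_meas T).comp hd1).mul ((sincK_meas T).comp hd2)).aestronglyMeasurable
      · filter_upwards with T
        filter_upwards with y
        rw [Real.norm_eq_abs, abs_mul]
        exact mul_le_one₀ (sincK_abs_le_one T _) (abs_nonneg _) (sincK_abs_le_one T _)
      · exact integrable_const 1
      · filter_upwards with y
        by_cases hy : y ∈ D
        · have hxy : X y.1 = X y.2 := hy
          have h1 : (d y).1 = 0 := by simp [hd, hxy]
          have h2 : (d y).2 = 0 := by simp [hd, hxy]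
          rw [Set.indicator_of_mem hy]
          have hfun : (fun T => sincK T (d y).1 * sincK T (d y).2) = fun _ => (1:ℝ) := by
            funext T
            rw [h1, h2]
            simp [sincK]
          rw [hfun]
          simp only [Pi.one_apply]
          exact tendsto_const_nhds
        · rw [Set.indicator_of_notMem hy]
          have ha : (d y).1 ≠ 0 := by
            simp only [hd]
            exact sub_ne_zero.mpr hy
          have hlim : Tendsto (fun T => |sincK T (d y).1|) atTop (nhds 0) := by
            have := (sincK_tendsto ha).abs
            simpa using this
          apply squeeze_zero_norm _ hlim
          intro T
          rw [Real.norm_eq_abs, abs_mul]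
          calc |sincK T (d y).1| * |sincK T (d y).2| ≤ |sincK T (d y).1| * 1 :=
                mul_le_mul_of_nonneg_left (sincK_abs_le_one T _) (abs_nonneg _)
            _ = |sincK T (d y).1| := mul_one _
    rwa [integral_indicator_one hDmeas] at h1
  -- upper bound
  have hupper : ∀ ε : ℝ, 0 < ε → (P2 D).toReal ≤ ε ^ 2 := by
    intro ε hε
    set C := max 1 (ε ^ (2 - v)) with hCdef
    have hC0 : (0:ℝ) ≤ C := le_trans zero_le_one (le_max_left _ _)
    have hIint : Integrable (fun p : ℝ × ℝ => ‖φ p‖ ^ v) volume := hInt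
    set I : ℝ := ∫ p, ‖φ p‖ ^ v with hIdef
    have hI0 : (0:ℝ) ≤ I := integral_nonneg fun p => Real.rpow_nonneg (norm_nonneg _) _
    have hbound : ∀ T : ℝ, 0 < T → A T ≤ ε ^ 2 + (C * I) / (4 * T ^ 2) := by
      intro T hT
      have hT2 : (0:ℝ) < 4 * T ^ 2 := by positivity
      have hboxfin : volume (box T) < ⊤ := by
        rw [hbox]
        simp only
        rw [show (volume : Measure (ℝ × ℝ)) = ((volume : Measure ℝ).prod volume) from
          MeasureTheory.Measure.volume_eq_prod ℝ ℝ]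
        rw [Measure.prod_prod, Real.volume_Ioc]
        exact ENNReal.mul_lt_top ENNReal.ofReal_lt_top ENNReal.ofReal_lt_top
      haveI : IsFiniteMeasure ((volume : Measure (ℝ × ℝ)).restrict (box T)) :=
        ⟨by rwa [Measure.restrict_apply_univ]⟩
      have hvol : (volume (box T)).toReal = 4 * T ^ 2 := by
        rw [hbox]
        simp only
        rw [show (volume : Measure (ℝ × ℝ)) = ((volume : Measure ℝ).prod volume) from
          MeasureTheory.Measure.volume_eq_prod ℝ ℝ]
        rw [Measure.prod_prod, Real.volume_Ioc, ENNReal.toReal_mul,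
          ENNReal.toReal_ofReal (by linarith)]
        ring_nf
      have hL : Integrable (fun p => ‖φ p‖ ^ 2) ((volume : Measure (ℝ × ℝ)).restrict (box T)) := by
        apply Integrable.mono' (integrable_const (1:ℝ))
          ((hφ_sm.norm.pow 2).aestronglyMeasurable.restrict)
        filter_upwards with p
        show ‖‖φ p‖ ^ 2‖ ≤ 1
        rw [Real.norm_eq_abs, abs_of_nonneg (by positivity)]
        calc ‖φ p‖ ^ 2 ≤ 1 ^ 2 := by
              apply pow_le_pow_left₀ (norm_nonneg _) (hφ_le p)
          _ = 1 := one_pow 2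
      have hR : Integrable (fun p => ε ^ 2 + C * ‖φ p‖ ^ v)
          ((volume : Measure (ℝ × ℝ)).restrict (box T)) :=
        (integrable_const _).add ((hIint.integrableOn).const_mul C)
      have hle : ∫ p in box T, ‖φ p‖ ^ 2 ≤ ∫ p in box T, (ε ^ 2 + C * ‖φ p‖ ^ v) := by
        apply integral_mono hL hR
        intro p
        exact pow_two_le_aux (norm_nonneg _) (hφ_le p) hε hv0
      have heq2 : ∫ p in box T, (ε ^ 2 + C * ‖φ p‖ ^ v) =
          ε ^ 2 * (4 * T ^ 2) + C * ∫ p in box T, ‖φ p‖ ^ v := by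
        rw [integral_add (integrable_const _) ((hIint.integrableOn).const_mul C)]
        rw [setIntegral_const, integral_const_mul, measureReal_def, hvol]
        simp [smul_eq_mul]
        ring
      have hIle : ∫ p in box T, ‖φ p‖ ^ v ≤ I := by
        rw [hIdef]
        apply setIntegral_le_integral hIint
        filter_upwards with p
        exact Real.rpow_nonneg (norm_nonneg _) _
      have hkey := key T hT
      have h6 : (4 * T ^ 2) * A T ≤ ε ^ 2 * (4 * T ^ 2) + C * I := by
        have hCmul : C * ∫ p in box T, ‖φ p‖ ^ v ≤ C * I :=
          mul_le_mul_of_nonneg_left hIle hC0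
        linarith [hkey ▸ hle]
      have h7 : A T ≤ (ε ^ 2 * (4 * T ^ 2) + C * I) / (4 * T ^ 2) := by
        rw [le_div_iff₀ hT2]
        linarith
      have h8 : (ε ^ 2 * (4 * T ^ 2) + C * I) / (4 * T ^ 2) =
          ε ^ 2 + (C * I) / (4 * T ^ 2) := by
        field_simp
      linarith [h8 ▸ h7]
    have h2 : Tendsto (fun T : ℝ => ε ^ 2 + (C * I) / (4 * T ^ 2)) atTop (nhds (ε ^ 2)) := by
      have h3 : Tendsto (fun T : ℝ => (C * I) / (4 * T ^ 2)) atTop (nhds 0) := by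
        apply Tendsto.div_atTop tendsto_const_nhds
        exact (tendsto_pow_atTop two_ne_zero).const_mul_atTop (by norm_num)
      simpa using tendsto_const_nhds.add h3
    apply le_of_tendsto_of_tendsto hAlim h2
    filter_upwards [eventually_gt_atTop 0] with T hT
    exact hbound T hT
  -- conclude P2 D = 0
  have hD0 : P2 D = 0 := by
    have ht0 : (P2 D).toReal = 0 := by
      by_contra hne
      have hpos : 0 < (P2 D).toReal := lt_of_le_of_ne ENNReal.toReal_nonneg (Ne.symm hne)
      have := hupper (Real.sqrt ((P2 D).toReal / 2)) (by positivity)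
      rw [Real.sq_sqrt (by positivity)] at this
      linarith
    rcases (ENNReal.toReal_eq_zero_iff _).mp ht0 with h0 | h0
    · exact h0
    · exact absurd h0 (measure_ne_top _ _)
  -- conclude
  have hsub : ({ω | X ω = x} ×ˢ {ω | X ω = x}) ⊆ D := by
    rintro ⟨ω, ω'⟩ ⟨h1, h2⟩
    simp only [Set.mem_setOf_eq] at h1 h2 ⊢
    rw [hD]; simp only [Set.mem_setOf_eq]; rw [h1, h2]
  have hprod : (ℙ : Measure Ω) {ω | X ω = x} * (ℙ : Measure Ω) {ω | X ω = x} = 0 := by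
    rw [← Measure.prod_prod]
    exact le_antisymm (hD0 ▸ measure_mono hsub) (by simp)
  rcases mul_eq_zero.mp hprod with h0 | h0 <;> exact h0
end

section
/- If E[X²] = ∞, then for any constants a, b > 0, lim_{t→0⁻} E[(X² − (2a/b²)X) exp(t(X − a/b²)²)] = +∞. -/
open scoped ProbabilityTheory
open MeasureTheory Real Filter

private lemma aux_y_exp_le {t y : ℝ} (ht : t < 0) (hy : 0 ≤ y) :
    y * Real.exp (t * y) ≤ 1 / (-t) := by
  have h1 : -t * y ≤ Real.exp (-t * y) := by
    nlinarith [Real.add_one_le_exp (-t * y)]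
  have h2 : (-t * y) * Real.exp (t * y) ≤ Real.exp (-t * y) * Real.exp (t * y) :=
    mul_le_mul_of_nonneg_right h1 (Real.exp_pos _).le
  rw [← Real.exp_add] at h2
  have h3 : -t * y + t * y = 0 := by ring
  rw [h3, Real.exp_zero] at h2
  rw [le_div_iff₀ (by linarith : (0:ℝ) < -t)]
  nlinarith

/-- If E[X²] = ∞, then for a, b > 0,
E[(X² − (2a/b²)X) exp(t(X − a/b²)²)] → +∞ as t → 0⁻. -/
theorem stmt8 {Ω : Type*} [MeasureSpace Ω] [IsProbabilityMeasure (ℙ : Measure Ω)]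
    (X : Ω → ℝ) (hX : Measurable X) (hXsq : ¬ Integrable (fun ω => (X ω) ^ 2))
    (a b : ℝ) (ha : 0 < a) (hb : 0 < b) :
    Tendsto (fun t : ℝ =>
        ∫ ω, ((X ω) ^ 2 - (2 * a / b ^ 2) * X ω) * Real.exp (t * (X ω - a / b ^ 2) ^ 2))
      (nhdsWithin 0 (Set.Iio 0)) atTop := by
  set c : ℝ := a / b ^ 2 with hc
  have hc0 : 0 < c := by positivity
  have h2ac : 2 * a / b ^ 2 = 2 * c := by rw [hc]; ring
  set Y : Ω → ℝ := fun ω => (X ω - c) ^ 2 with hY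
  have hYm : Measurable Y := (hX.sub measurable_const).pow_const 2
  have hY0 : ∀ ω, 0 ≤ Y ω := fun ω => sq_nonneg _
  have hid : ∀ ω, X ω ^ 2 - 2 * c * X ω = Y ω - c ^ 2 := fun ω => by
    simp only [hY]; ring
  -- measurability
  have hFm : ∀ t : ℝ, Measurable fun ω => (X ω ^ 2 - 2 * c * X ω) * Real.exp (t * Y ω) :=
    fun t => ((hX.pow_const 2).sub (measurable_const.mul hX)).mul
      ((hYm.const_mul t).exp)
  have hGm : ∀ t : ℝ, Measurable fun ω => X ω ^ 2 * Real.exp (t * Y ω) :=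
    fun t => (hX.pow_const 2).mul ((hYm.const_mul t).exp)
  -- bounded measurable functions are integrable
  have hbdd : ∀ (f : Ω → ℝ), Measurable f → ∀ C : ℝ, (∀ ω, |f ω| ≤ C) → Integrable f := by
    intro f hf C h
    exact (integrable_const C).mono' hf.aestronglyMeasurable
      (ae_of_all _ fun ω => by simpa [Real.norm_eq_abs] using h ω)
  -- integrability of F t
  have hFint : ∀ t : ℝ, t < 0 →
      Integrable (fun ω => (X ω ^ 2 - 2 * c * X ω) * Real.exp (t * Y ω)) := by
    intro t ht
    refine hbdd _ (hFm t) (1 / (-t) + c ^ 2) fun ω => ?_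
    have hye := aux_y_exp_le ht (hY0 ω)
    have he0 : 0 < Real.exp (t * Y ω) := Real.exp_pos _
    have he1 : Real.exp (t * Y ω) ≤ 1 := by
      rw [Real.exp_le_one_iff]
      exact mul_nonpos_of_nonpos_of_nonneg ht.le (hY0 ω)
    rw [abs_le]
    constructor
    · rw [hid ω]; nlinarith [sq_nonneg c, mul_nonneg (hY0 ω) he0.le]
    · rw [hid ω]; nlinarith [sq_nonneg c, mul_nonneg (sq_nonneg c) he0.le]
  -- integrability of G t
  have hGint : ∀ t : ℝ, t < 0 →
      Integrable (fun ω => X ω ^ 2 * Real.exp (t * Y ω)) := by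
    intro t ht
    refine hbdd _ (hGm t) (2 / (-t) + 2 * c ^ 2) fun ω => ?_
    have hye := aux_y_exp_le ht (hY0 ω)
    have he0 : 0 < Real.exp (t * Y ω) := Real.exp_pos _
    have he1 : Real.exp (t * Y ω) ≤ 1 := by
      rw [Real.exp_le_one_iff]
      exact mul_nonpos_of_nonpos_of_nonneg ht.le (hY0 ω)
    have hxb : X ω ^ 2 ≤ 2 * Y ω + 2 * c ^ 2 := by
      have := sq_nonneg (X ω - 2 * c)
      simp only [hY]; nlinarith
    rw [abs_of_nonneg (by positivity)]
    have h2t : 2 / (-t) = 2 * (1 / (-t)) := by ring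
    rw [h2t]
    nlinarith [mul_le_mul_of_nonneg_right hxb he0.le, mul_nonneg (sq_nonneg c) (sub_nonneg.2 he1)]
  -- the ∫ X² exp(tY) integrals are unbounded as t → 0⁻
  have hsup : ∀ K : ℝ, ∃ t₀ : ℝ, t₀ < 0 ∧ K < ∫ ω, X ω ^ 2 * Real.exp (t₀ * Y ω) := by
    intro K
    by_contra h
    push_neg at h
    apply hXsq
    have hneg : ∀ n : ℕ, (-(1 / ((n : ℝ) + 1)) : ℝ) < 0 := fun n => neg_neg_iff_pos.mpr (by positivity)
    set f : ℕ → Ω → ENNReal := fun n ω =>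
      ENNReal.ofReal (X ω ^ 2 * Real.exp (-(1 / ((n : ℝ) + 1)) * Y ω)) with hf
    have hfm : ∀ n, Measurable (f n) := fun n =>
      (hGm (-(1 / ((n : ℝ) + 1)))).ennreal_ofReal
    have hmono : ∀ ω, Monotone fun n => f n ω := by
      intro ω m n hmn
      apply ENNReal.ofReal_le_ofReal
      apply mul_le_mul_of_nonneg_left _ (sq_nonneg _)
      apply Real.exp_le_exp.2
      apply mul_le_mul_of_nonneg_right _ (hY0 ω)
      have h1 : (m : ℝ) + 1 ≤ (n : ℝ) + 1 := by exact_mod_cast by omega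
      have h2 : (0:ℝ) < (m : ℝ) + 1 := by positivity
      have := one_div_le_one_div_of_le h2 h1
      linarith
    have htend : ∀ ω, Tendsto (fun n => f n ω) atTop (nhds (ENNReal.ofReal (X ω ^ 2))) := by
      intro ω
      apply (ENNReal.continuous_ofReal.tendsto _).comp
      have h1 : Tendsto (fun n : ℕ => -(1 / ((n : ℝ) + 1)) * Y ω) atTop (nhds 0) := by
        have := tendsto_one_div_add_atTop_nhds_zero_nat (𝕜 := ℝ)
        have h2 := (this.neg).mul_const (Y ω)
        simpa using h2
      have h3 : Tendsto (fun n : ℕ => Real.exp (-(1 / ((n : ℝ) + 1)) * Y ω)) atTop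
          (nhds 1) := by
        have := (Real.continuous_exp.tendsto 0).comp h1
        simpa [Function.comp_def] using this
      have := h3.const_mul (X ω ^ 2)
      simpa using this
    have hsupf : ∀ ω, (⨆ n, f n ω) = ENNReal.ofReal (X ω ^ 2) := by
      intro ω
      exact tendsto_nhds_unique (tendsto_atTop_iSup (hmono ω)) (htend ω)
    have hlin : ∀ n, ∫⁻ ω, f n ω ≤ ENNReal.ofReal K := by
      intro n
      have hint := hGint _ (hneg n)
      have heq := ofReal_integral_eq_lintegral_ofReal hint
        (ae_of_all _ fun ω => by simpa using mul_nonneg (sq_nonneg (X ω)) (Real.exp_pos _).le)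
      rw [hf]
      simp only
      rw [← heq]
      exact ENNReal.ofReal_le_ofReal (h _ (hneg n))
    have hfin : ∫⁻ ω, ENNReal.ofReal (X ω ^ 2) ∂(ℙ : Measure Ω) ≤ ENNReal.ofReal K := by
      have hls := lintegral_iSup (μ := (ℙ : Measure Ω)) hfm (fun m n hmn ω => hmono ω hmn)
      calc ∫⁻ ω, ENNReal.ofReal (X ω ^ 2) ∂(ℙ : Measure Ω)
          = ∫⁻ ω, ⨆ n, f n ω ∂(ℙ : Measure Ω) := by
            congr 1; ext ω; rw [hsupf ω]
        _ = ⨆ n, ∫⁻ ω, f n ω ∂(ℙ : Measure Ω) := hls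
        _ ≤ ENNReal.ofReal K := iSup_le hlin
    refine ⟨(hX.pow_const 2).aestronglyMeasurable, ?_⟩
    rw [hasFiniteIntegral_iff_ofReal (ae_of_all _ fun ω => sq_nonneg _)]
    exact lt_of_le_of_lt hfin ENNReal.ofReal_lt_top
  -- pointwise lower bound and assembly
  rw [tendsto_atTop]
  intro M
  obtain ⟨t₀, ht₀, hKt₀⟩ := hsup ((4 / 3) * (M + 4 * c ^ 2))
  have hmem : Set.Ioo t₀ 0 ∈ nhdsWithin (0 : ℝ) (Set.Iio 0) :=
    Ioo_mem_nhdsLT_of_mem ⟨ht₀, le_refl 0⟩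
  filter_upwards [hmem] with t ht
  have ht0 : t < 0 := ht.2
  have key : ∀ ω, (3 / 4) * (X ω ^ 2 * Real.exp (t * Y ω)) - 4 * c ^ 2 ≤
      (X ω ^ 2 - 2 * c * X ω) * Real.exp (t * Y ω) := by
    intro ω
    have he0 : 0 < Real.exp (t * Y ω) := Real.exp_pos _
    have he1 : Real.exp (t * Y ω) ≤ 1 := by
      rw [Real.exp_le_one_iff]
      exact mul_nonpos_of_nonpos_of_nonneg ht0.le (hY0 ω)
    nlinarith [mul_nonneg he0.le (sq_nonneg (X ω / 2 - 2 * c)),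
      mul_nonneg (sq_nonneg c) (sub_nonneg.2 he1)]
  have hint2 : Integrable (fun ω =>
      (3 / 4) * (X ω ^ 2 * Real.exp (t * Y ω)) - 4 * c ^ 2) :=
    ((hGint t ht0).const_mul _).sub (integrable_const _)
  have hmono1 : ∫ ω, ((3 / 4) * (X ω ^ 2 * Real.exp (t * Y ω)) - 4 * c ^ 2) ≤
      ∫ ω, (X ω ^ 2 - 2 * c * X ω) * Real.exp (t * Y ω) :=
    integral_mono hint2 (hFint t ht0) key
  have hsplit : ∫ ω, ((3 / 4) * (X ω ^ 2 * Real.exp (t * Y ω)) - 4 * c ^ 2) =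
      (3 / 4) * (∫ ω, X ω ^ 2 * Real.exp (t * Y ω)) - 4 * c ^ 2 := by
    rw [integral_sub ((hGint t ht0).const_mul _) (integrable_const _),
      integral_const_mul, integral_const]
    simp [measure_univ]
  have hmono2 : ∫ ω, X ω ^ 2 * Real.exp (t₀ * Y ω) ≤
      ∫ ω, X ω ^ 2 * Real.exp (t * Y ω) := by
    apply integral_mono (hGint t₀ ht₀) (hGint t ht0)
    intro ω
    apply mul_le_mul_of_nonneg_left _ (sq_nonneg _)
    exact Real.exp_le_exp.2 (mul_le_mul_of_nonneg_right ht.1.le (hY0 ω))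
  have hfinal : M ≤ ∫ ω, (X ω ^ 2 - 2 * c * X ω) * Real.exp (t * Y ω) := by
    rw [hsplit] at hmono1
    nlinarith
  calc M ≤ ∫ ω, (X ω ^ 2 - 2 * c * X ω) * Real.exp (t * Y ω) := hfinal
    _ = ∫ ω, (X ω ^ 2 - 2 * a / b ^ 2 * X ω) * Real.exp (t * Y ω) := by rw [h2ac]
end

section
/- Fix 0 < b < 1 and a > 0 with support of X intersecting (a₁(a), a₂(a)), and assume X has continuous distribution. Then sup_{t ∈ ℝ} g(t, a) = sup_{t < 0} g(t, a), where g(t,a) = −(a²/b²)t − log E[exp(t(X² − (2a/b²)X))], and this supremum is attained at a unique finite point t̃(a,b) < 0 satisfying ∂g/∂t = 0. -/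
open MeasureTheory Real Filter
open scoped ProbabilityTheory
open scoped Classical
section aux
variable {Ω : Type*} [MeasureSpace Ω] [IsProbabilityMeasure (ℙ : Measure Ω)]
  {Y : Ω → ℝ} {m : ℝ}

lemma aux_pos {f : Ω → ℝ} (hint : Integrable f) (hf : ∀ ω, 0 < f ω) :
    0 < ∫ ω, f ω := by
  rw [integral_pos_iff_support_of_nonneg_ae (Filter.Eventually.of_forall fun ω => (hf ω).le) hint]
  have : Function.support f = Set.univ := Set.eq_univ_of_forall fun ω => (hf ω).ne'
  rw [this]
  simp

lemma aux_int (hY : Measurable Y) (hm : ∀ ω, m ≤ Y ω) {t : ℝ} (ht : t ≤ 0) :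
    Integrable (fun ω => exp (t * Y ω)) := by
  refine Integrable.mono' (integrable_const (exp (t * m)))
    ((hY.const_mul t).exp).aestronglyMeasurable (Filter.Eventually.of_forall fun ω => ?_)
  rw [Real.norm_eq_abs, abs_of_pos (exp_pos _)]
  exact exp_le_exp.2 (mul_le_mul_of_nonpos_left (hm ω) ht)

lemma aux_bound (hm : ∀ ω, m ≤ Y ω) {t : ℝ} (ht : t < 0) (ω : Ω) :
    |Y ω * exp (t * Y ω)| ≤ 1 / (-t) + |m| * exp (|t| * |m|) := by
  set y := Y ω with hy
  have h2 : (0:ℝ) ≤ |m| * exp (|t| * |m|) := by positivity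
  rcases le_or_gt 0 y with h | h
  · have key : y * exp (t * y) ≤ 1 / (-t) := by
      rw [le_div_iff₀ (by linarith)]
      have h1 : (-t) * y ≤ exp ((-t) * y) := by
        nlinarith [Real.add_one_le_exp ((-t) * y)]
      calc y * exp (t * y) * (-t) = ((-t) * y) * exp (t * y) := by ring
        _ ≤ exp ((-t) * y) * exp (t * y) := by
            exact mul_le_mul_of_nonneg_right h1 (exp_pos _).le
        _ = 1 := by rw [← exp_add]; ring_nf; exact exp_zero
    rw [abs_of_nonneg (by positivity)]
    linarith
  · have hym : -y ≤ |m| := by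
      have := hm ω
      rw [← hy] at *
      have : m < 0 := lt_of_le_of_lt (hm ω) h
      rw [abs_of_neg this]; linarith [hm ω]
    have he : exp (t * y) ≤ exp (|t| * |m|) := by
      apply exp_le_exp.2
      calc t * y ≤ t * m := mul_le_mul_of_nonpos_left (hm ω) ht.le
        _ ≤ |t * m| := le_abs_self _
        _ = |t| * |m| := abs_mul _ _
    have : |y * exp (t * y)| = (-y) * exp (t * y) := by
      rw [abs_mul, abs_of_pos (exp_pos _), abs_of_neg h]
    rw [this]
    have : (-y) * exp (t * y) ≤ |m| * exp (|t| * |m|) :=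
      mul_le_mul hym he (exp_pos _).le (abs_nonneg _)
    have hpos : 0 < 1 / (-t) := div_pos one_pos (by linarith)
    linarith

lemma aux_int_deriv (hY : Measurable Y) (hm : ∀ ω, m ≤ Y ω) {t : ℝ} (ht : t < 0) :
    Integrable (fun ω => Y ω * exp (t * Y ω)) := by
  refine Integrable.mono' (integrable_const (1 / (-t) + |m| * exp (|t| * |m|)))
    (hY.mul ((hY.const_mul t).exp)).aestronglyMeasurable
    (Filter.Eventually.of_forall fun ω => ?_)
  exact aux_bound hm ht ω


lemma aux_hasDerivAt (hY : Measurable Y) (hm : ∀ ω, m ≤ Y ω) {t : ℝ} (ht : t < 0) :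
    HasDerivAt (fun s => ∫ ω, exp (s * Y ω)) (∫ ω, Y ω * exp (t * Y ω)) t := by
  have hball : ∀ s ∈ Metric.ball t (-t/2), s < 0 ∧ -t/2 ≤ -s ∧ |s| ≤ 2 * |t| := by
    intro s hs
    rw [Metric.mem_ball, Real.dist_eq, abs_lt] at hs
    constructor
    · linarith [hs.2]
    constructor
    · linarith [hs.2]
    · rw [abs_le]
      constructor
      · have := abs_nonneg t
        rw [abs_of_neg ht]
        linarith [hs.1]
      · have : (0:ℝ) < -t := by linarith
        rw [abs_of_neg ht]
        linarith [hs.2]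
  have key := hasDerivAt_integral_of_dominated_loc_of_deriv_le
    (μ := (ℙ : Measure Ω)) (F := fun s ω => exp (s * Y ω))
    (F' := fun s ω => Y ω * exp (s * Y ω))
    (bound := fun _ => 2 / (-t) + |m| * exp ((2 * |t|) * |m|))
    (x₀ := t) (s := Metric.ball t (-t/2)) (Metric.ball_mem_nhds t (by linarith))
    (Filter.Eventually.of_forall fun s => ((hY.const_mul s).exp).aestronglyMeasurable)
    (aux_int hY hm ht.le)
    ((hY.mul ((hY.const_mul t).exp)).aestronglyMeasurable)
    (Filter.Eventually.of_forall fun ω => ?_) ?_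
    (Filter.Eventually.of_forall fun ω s hs => ?_)
  · exact key.2
  · intro s hs
    obtain ⟨hs0, hs1, hs2⟩ := hball s hs
    calc ‖Y ω * exp (s * Y ω)‖ ≤ 1 / (-s) + |m| * exp (|s| * |m|) := aux_bound hm hs0 ω
      _ ≤ 2 / (-t) + |m| * exp ((2 * |t|) * |m|) := by
          have e1 : 1 / (-s) ≤ 2 / (-t) := by
            have := one_div_le_one_div_of_le (by linarith : (0:ℝ) < -t/2) hs1
            calc 1 / (-s) ≤ 1 / (-t/2) := this
              _ = 2 / (-t) := by rw [div_div_eq_mul_div]; ring_nf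
          have e2 : |m| * exp (|s| * |m|) ≤ |m| * exp ((2 * |t|) * |m|) :=
            mul_le_mul_of_nonneg_left
              (exp_le_exp.2 (mul_le_mul_of_nonneg_right hs2 (abs_nonneg m)))
              (abs_nonneg m)
          linarith
  · exact integrable_const _
  · have h1 : HasDerivAt (fun u : ℝ => u * Y ω) (Y ω) s := by
      simpa using (hasDerivAt_id s).mul_const (Y ω)
    have := h1.exp
    simpa [mul_comm] using this

lemma aux_contOn (hY : Measurable Y) (hm : ∀ ω, m ≤ Y ω) {T : ℝ} (hT : T ≤ 0) :
    ContinuousOn (fun s => ∫ ω, exp (s * Y ω)) (Set.Icc T 0) := by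
  apply continuousOn_of_dominated (bound := fun _ => exp (|T * m|))
  · exact fun s _ => ((hY.const_mul s).exp).aestronglyMeasurable
  · intro s hs
    refine Filter.Eventually.of_forall fun ω => ?_
    rw [Real.norm_eq_abs, abs_of_pos (exp_pos _)]
    apply exp_le_exp.2
    rcases le_or_gt 0 (Y ω) with h | h
    · have : s * Y ω ≤ 0 := mul_nonpos_of_nonpos_of_nonneg hs.2 h
      exact this.trans (abs_nonneg _)
    · calc s * Y ω ≤ T * Y ω := mul_le_mul_of_nonpos_right hs.1 h.le
        _ ≤ T * m := mul_le_mul_of_nonpos_left (hm ω) hT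
        _ ≤ |T * m| := le_abs_self _
  · exact integrable_const _
  · exact Filter.Eventually.of_forall fun ω =>
      ((continuous_id.mul continuous_const).rexp).continuousOn


lemma aux_tn_tendsto : Tendsto (fun n : ℕ => -(1 / ((n:ℝ) + 1))) atTop (nhds 0) := by
  have := tendsto_one_div_add_atTop_nhds_zero_nat (𝕜 := ℝ)
  simpa using this.neg

lemma aux_exists_pos_deriv (hY : Measurable Y) (hm : ∀ ω, m ≤ Y ω)
    (hEY : (Integrable Y ∧ 0 < ∫ ω, Y ω) ∨ ¬ Integrable (fun ω => max (Y ω) 0)) :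
    ∃ t : ℝ, t < 0 ∧ 0 < ∫ ω, Y ω * exp (t * Y ω) := by
  set tn : ℕ → ℝ := fun n => -(1 / ((n:ℝ) + 1)) with htn
  have htn_neg : ∀ n, tn n < 0 := fun n => by
    have : (0:ℝ) < 1 / ((n:ℝ) + 1) := by positivity
    simp only [htn]; linarith
  have htn_ge : ∀ n, -1 ≤ tn n := fun n => by
    have h1 : (1:ℝ) ≤ (n:ℝ) + 1 := by linarith [Nat.cast_nonneg (α:=ℝ) n]
    have : 1 / ((n:ℝ) + 1) ≤ 1 := by
      rw [div_le_one (by positivity)]; exact h1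
    simp only [htn]; linarith
  rcases hEY with ⟨hint, hpos⟩ | hnint
  · -- dominated convergence to ∫ Y > 0
    have hconv : Tendsto (fun n => ∫ ω, Y ω * exp (tn n * Y ω)) atTop (nhds (∫ ω, Y ω)) := by
      apply tendsto_integral_of_dominated_convergence
        (bound := fun ω => |Y ω| + |m| * exp |m|)
      · exact fun n => (hY.mul ((hY.const_mul (tn n)).exp)).aestronglyMeasurable
      · exact hint.abs.add (integrable_const _)
      · intro n
        refine Filter.Eventually.of_forall fun ω => ?_
        rw [Real.norm_eq_abs]
        rcases le_or_gt 0 (Y ω) with h | h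
        · have he : exp (tn n * Y ω) ≤ 1 := by
            rw [← exp_zero]
            exact exp_le_exp.2 (mul_nonpos_of_nonpos_of_nonneg (htn_neg n).le h)
          have : |Y ω * exp (tn n * Y ω)| = Y ω * exp (tn n * Y ω) := by
            rw [abs_of_nonneg (by positivity)]
          rw [this]
          have h2 : (0:ℝ) ≤ |m| * exp |m| := by positivity
          nlinarith [abs_nonneg (Y ω), le_abs_self (Y ω)]
        · have hym : -(Y ω) ≤ |m| := by
            have hm0 : m < 0 := lt_of_le_of_lt (hm ω) h
            rw [abs_of_neg hm0]; linarith [hm ω]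
          have he : exp (tn n * Y ω) ≤ exp |m| := by
            apply exp_le_exp.2
            calc tn n * Y ω ≤ tn n * m := mul_le_mul_of_nonpos_left (hm ω) (htn_neg n).le
              _ ≤ |tn n * m| := le_abs_self _
              _ = |tn n| * |m| := abs_mul _ _
              _ ≤ 1 * |m| := by
                  apply mul_le_mul_of_nonneg_right _ (abs_nonneg m)
                  rw [abs_le]; exact ⟨htn_ge n, by linarith [htn_neg n]⟩
              _ = |m| := one_mul _
          have : |Y ω * exp (tn n * Y ω)| = (-(Y ω)) * exp (tn n * Y ω) := by
            rw [abs_mul, abs_of_pos (exp_pos _), abs_of_neg h]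
          rw [this]
          have h3 : (-(Y ω)) * exp (tn n * Y ω) ≤ |m| * exp |m| :=
            mul_le_mul hym he (exp_pos _).le (abs_nonneg _)
          linarith [abs_nonneg (Y ω)]
      · refine Filter.Eventually.of_forall fun ω => ?_
        have hc : Continuous fun u : ℝ => Y ω * exp (u * Y ω) :=
          continuous_const.mul ((continuous_id.mul continuous_const).rexp)
        have h00 : Y ω * exp ((0:ℝ) * Y ω) = Y ω := by norm_num
        have h2 := (hc.tendsto 0).comp aux_tn_tendsto
        rw [h00] at h2
        exact h2
    have := hconv.eventually (eventually_gt_nhds hpos)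
    obtain ⟨n, hn⟩ := this.exists
    exact ⟨tn n, htn_neg n, hn⟩
  · -- MCT: ∫ Y⁺ exp(tₙ Y) → ∞
    set B : ℝ := |m| * exp |m| with hB
    have hBnn : 0 ≤ B := by positivity
    have hlin : ∫⁻ ω, ENNReal.ofReal (max (Y ω) 0) = ⊤ := by
      by_contra hfin
      apply hnint
      refine ⟨(hY.max measurable_const).aestronglyMeasurable, ?_⟩
      exact (hasFiniteIntegral_iff_ofReal
        (Filter.Eventually.of_forall fun ω => le_max_right _ _)).2 (lt_top_iff_ne_top.2 hfin)
    have hmono : ∀ ω, Monotone fun n : ℕ =>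
        ENNReal.ofReal (max (Y ω) 0 * exp (tn n * Y ω)) := by
      intro ω i j hij
      apply ENNReal.ofReal_le_ofReal
      rcases le_or_gt (Y ω) 0 with h | h
      · simp [max_eq_right h]
      · have : tn i ≤ tn j := by
          simp only [htn, neg_le_neg_iff]
          apply div_le_div_of_nonneg_left one_pos.le (by positivity)
          · exact_mod_cast Nat.add_le_add_right hij 1
        exact mul_le_mul_of_nonneg_left
          (exp_le_exp.2 (mul_le_mul_of_nonneg_right this h.le)) (le_max_right _ _)
    have htend : ∀ ω, Tendsto (fun n : ℕ =>
        ENNReal.ofReal (max (Y ω) 0 * exp (tn n * Y ω))) atTop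
        (nhds (ENNReal.ofReal (max (Y ω) 0))) := by
      intro ω
      apply (ENNReal.continuous_ofReal.tendsto _).comp
      have hc : Continuous fun u : ℝ => max (Y ω) 0 * exp (u * Y ω) :=
        continuous_const.mul ((continuous_id.mul continuous_const).rexp)
      have h00 : max (Y ω) 0 * exp ((0:ℝ) * Y ω) = max (Y ω) 0 := by norm_num
      have h2 := (hc.tendsto 0).comp aux_tn_tendsto
      rw [h00] at h2
      exact h2
    have hMCT : Tendsto (fun n => ∫⁻ ω, ENNReal.ofReal (max (Y ω) 0 * exp (tn n * Y ω)))
        atTop (nhds ⊤) := by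
      rw [← hlin]
      apply lintegral_tendsto_of_tendsto_of_monotone
      · exact fun n => (((hY.max measurable_const).mul
          ((hY.const_mul (tn n)).exp)).ennreal_ofReal).aemeasurable
      · exact Filter.Eventually.of_forall hmono
      · exact Filter.Eventually.of_forall htend
    have hev := hMCT.eventually (eventually_gt_nhds
      (lt_top_iff_ne_top.2 ENNReal.ofReal_ne_top : ENNReal.ofReal B < ⊤))
    obtain ⟨n, hn⟩ := hev.exists
    refine ⟨tn n, htn_neg n, ?_⟩
    -- split Y = Y⁺ - Y⁻
    have hintp : Integrable (fun ω => max (Y ω) 0 * exp (tn n * Y ω)) := by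
      refine Integrable.mono' (integrable_const (1 / (-(tn n))))
        (((hY.max measurable_const).mul
          ((hY.const_mul (tn n)).exp)).aestronglyMeasurable)
        (Filter.Eventually.of_forall fun ω => ?_)
      rw [Real.norm_eq_abs, abs_of_nonneg (by positivity)]
      rcases le_or_gt (Y ω) 0 with h | h
      · rw [max_eq_right h, zero_mul]
        exact (div_pos one_pos (by linarith [htn_neg n])).le
      · rw [max_eq_left h.le]
        rw [le_div_iff₀ (by linarith [htn_neg n])]
        have h1 : (-(tn n)) * Y ω ≤ exp ((-(tn n)) * Y ω) := by
          nlinarith [Real.add_one_le_exp ((-(tn n)) * Y ω)]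
        calc Y ω * exp (tn n * Y ω) * (-(tn n))
            = ((-(tn n)) * Y ω) * exp (tn n * Y ω) := by ring
          _ ≤ exp ((-(tn n)) * Y ω) * exp (tn n * Y ω) :=
              mul_le_mul_of_nonneg_right h1 (exp_pos _).le
          _ = 1 := by rw [← exp_add]; ring_nf; exact exp_zero
    have hintm : Integrable (fun ω => max (-(Y ω)) 0 * exp (tn n * Y ω)) := by
      refine Integrable.mono' (integrable_const B)
        (((hY.neg.max measurable_const).mul
          ((hY.const_mul (tn n)).exp)).aestronglyMeasurable)
        (Filter.Eventually.of_forall fun ω => ?_)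
      rw [Real.norm_eq_abs, abs_of_nonneg (by positivity)]
      rcases le_or_gt 0 (Y ω) with h | h
      · rw [max_eq_right (by linarith : -(Y ω) ≤ 0), zero_mul]; exact hBnn
      · rw [max_eq_left (by linarith : (0:ℝ) ≤ -(Y ω))]
        have hym : -(Y ω) ≤ |m| := by
          have hm0 : m < 0 := lt_of_le_of_lt (hm ω) h
          rw [abs_of_neg hm0]; linarith [hm ω]
        have he : exp (tn n * Y ω) ≤ exp |m| := by
          apply exp_le_exp.2
          calc tn n * Y ω ≤ tn n * m := mul_le_mul_of_nonpos_left (hm ω) (htn_neg n).le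
            _ ≤ |tn n * m| := le_abs_self _
            _ = |tn n| * |m| := abs_mul _ _
            _ ≤ 1 * |m| := by
                apply mul_le_mul_of_nonneg_right _ (abs_nonneg m)
                rw [abs_le]; exact ⟨htn_ge n, by linarith [htn_neg n]⟩
            _ = |m| := one_mul _
        exact mul_le_mul hym he (exp_pos _).le (abs_nonneg _)
    have hsplit : (fun ω => Y ω * exp (tn n * Y ω)) =
        fun ω => max (Y ω) 0 * exp (tn n * Y ω) - max (-(Y ω)) 0 * exp (tn n * Y ω) := by
      funext ω
      have h0 : max (Y ω) 0 - max (-(Y ω)) 0 = Y ω := max_zero_sub_max_neg_zero_eq_self (Y ω)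
      rw [← sub_mul, h0]
    rw [hsplit, integral_sub hintp hintm]
    have hA : B < ∫ ω, max (Y ω) 0 * exp (tn n * Y ω) := by
      have heq : ∫ ω, max (Y ω) 0 * exp (tn n * Y ω)
          = (∫⁻ ω, ENNReal.ofReal (max (Y ω) 0 * exp (tn n * Y ω))).toReal := by
        rw [integral_eq_lintegral_of_nonneg_ae (f := fun ω => max (Y ω) 0 * exp (tn n * Y ω))
          (Filter.Eventually.of_forall fun ω => by positivity)
          (((hY.max measurable_const).mul
            ((hY.const_mul (tn n)).exp)).aestronglyMeasurable)]
      rw [heq]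
      have hfin : ∫⁻ ω, ENNReal.ofReal (max (Y ω) 0 * exp (tn n * Y ω)) ≠ ⊤ := by
        exact lt_top_iff_ne_top.1 ((hasFiniteIntegral_iff_ofReal
          (Filter.Eventually.of_forall fun ω => by positivity)).1 hintp.2)
      rw [← ENNReal.ofReal_lt_iff_lt_toReal hBnn hfin]
      exact hn
    have hC : ∫ ω, max (-(Y ω)) 0 * exp (tn n * Y ω) ≤ B := by
      have := integral_mono hintm (integrable_const B) ?_
      · simpa using this
      · intro ω
        show max (-(Y ω)) 0 * exp (tn n * Y ω) ≤ B
        rcases le_or_gt 0 (Y ω) with h | h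
        · simp only [max_eq_right (by linarith : -(Y ω) ≤ 0), zero_mul]; exact hBnn
        · rw [max_eq_left (by linarith : (0:ℝ) ≤ -(Y ω))]
          have hym : -(Y ω) ≤ |m| := by
            have hm0 : m < 0 := lt_of_le_of_lt (hm ω) h
            rw [abs_of_neg hm0]; linarith [hm ω]
          have he : exp (tn n * Y ω) ≤ exp |m| := by
            apply exp_le_exp.2
            calc tn n * Y ω ≤ tn n * m := mul_le_mul_of_nonpos_left (hm ω) (htn_neg n).le
              _ ≤ |tn n * m| := le_abs_self _
              _ = |tn n| * |m| := abs_mul _ _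
              _ ≤ 1 * |m| := by
                  apply mul_le_mul_of_nonneg_right _ (abs_nonneg m)
                  rw [abs_le]; exact ⟨htn_ge n, by linarith [htn_neg n]⟩
              _ = |m| := one_mul _
          exact mul_le_mul hym he (exp_pos _).le (abs_nonneg _)
    linarith


lemma aux_lower (hY : Measurable Y) (hm : ∀ ω, m ≤ Y ω) {δ : ℝ} (hδ : 0 < δ)
    {t : ℝ} (ht : t < 0) :
    exp (-t * δ) * (ℙ {ω | Y ω < -δ}).toReal ≤ ∫ ω, exp (t * Y ω) := by
  have hms : MeasurableSet {ω | Y ω < -δ} := hY measurableSet_Iio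
  have hind : ∫ ω, Set.indicator {ω | Y ω < -δ} (fun _ => exp (-t * δ)) ω
      = exp (-t * δ) * (ℙ {ω | Y ω < -δ}).toReal := by
    rw [integral_indicator_const _ hms]
    simp [mul_comm]
    rfl
  rw [← hind]
  apply integral_mono _ (aux_int hY hm ht.le)
  · intro ω
    by_cases hω : ω ∈ {ω | Y ω < -δ}
    · rw [Set.indicator_of_mem hω]
      exact exp_le_exp.2 (by nlinarith [hω.out])
    · rw [Set.indicator_of_notMem hω]
      exact (exp_pos _).le
  · exact (integrable_const _).indicator hms

lemma aux_ge_one (hY : Measurable Y) (hm : ∀ ω, m ≤ Y ω)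
    (hEY : (Integrable Y ∧ 0 < ∫ ω, Y ω) ∨ ¬ Integrable (fun ω => max (Y ω) 0))
    {t : ℝ} (ht : 0 < t) (hint : Integrable (fun ω => exp (t * Y ω))) :
    1 ≤ ∫ ω, exp (t * Y ω) := by
  rcases hEY with ⟨hintY, hpos⟩ | hnint
  · have h1 : ∫ ω, (1 + t * Y ω) ≤ ∫ ω, exp (t * Y ω) := by
      apply integral_mono ((integrable_const 1).add (hintY.const_mul t)) hint
      intro ω
      have := Real.add_one_le_exp (t * Y ω)
      simpa [add_comm] using this
    rw [integral_add (integrable_const 1) (hintY.const_mul t),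
      integral_const, integral_const_mul] at h1
    simp only [measure_univ, probReal_univ, ENNReal.toReal_one, smul_eq_mul, one_mul] at h1
    nlinarith
  · exfalso
    apply hnint
    refine Integrable.mono' (hint.div_const t)
      ((hY.max measurable_const).aestronglyMeasurable)
      (Filter.Eventually.of_forall fun ω => ?_)
    rw [Real.norm_eq_abs, abs_of_nonneg (le_max_right _ _)]
    rcases le_or_gt (Y ω) 0 with h | h
    · rw [max_eq_right h]
      positivity
    · rw [max_eq_left h.le, le_div_iff₀ ht]
      calc Y ω * t = t * Y ω := mul_comm _ _
        _ ≤ exp (t * Y ω) := by nlinarith [Real.add_one_le_exp (t * Y ω)]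

lemma aux_strict (hY : Measurable Y) (hm : ∀ ω, m ≤ Y ω) {δ : ℝ} (hδ : 0 < δ)
    (hp : 0 < ℙ {ω | Y ω < -δ}) {s t : ℝ} (hs : s ≤ 0) (ht : t ≤ 0) (hne : s ≠ t) :
    ∫ ω, exp ((s + t)/2 * Y ω) < ((∫ ω, exp (s * Y ω)) + ∫ ω, exp (t * Y ω))/2 := by
  have hu : (s + t)/2 ≤ 0 := by linarith
  have hints := aux_int hY hm hs
  have hintt := aux_int hY hm ht
  have hintu := aux_int hY hm hu
  set d : Ω → ℝ := fun ω => (exp (s * Y ω) + exp (t * Y ω))/2 - exp ((s + t)/2 * Y ω)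
    with hd
  have hdsq : ∀ ω, d ω = (exp (s * Y ω / 2) - exp (t * Y ω / 2))^2 / 2 := by
    intro ω
    have e1 : exp (s * Y ω) = exp (s * Y ω / 2) * exp (s * Y ω / 2) := by
      rw [← exp_add]; ring_nf
    have e2 : exp (t * Y ω) = exp (t * Y ω / 2) * exp (t * Y ω / 2) := by
      rw [← exp_add]; ring_nf
    have e3 : exp ((s + t)/2 * Y ω) = exp (s * Y ω / 2) * exp (t * Y ω / 2) := by
      rw [← exp_add]; ring_nf
    rw [hd]; simp only
    rw [e1, e2, e3]; ring
  have hdnn : ∀ ω, 0 ≤ d ω := fun ω => by rw [hdsq ω]; positivity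
  have h5 : Integrable (fun ω => (exp (s * Y ω) + exp (t * Y ω))/2) :=
    (hints.add hintt).div_const 2
  have hdint : Integrable d := h5.sub hintu
  have hdpos : 0 < ∫ ω, d ω := by
    rw [integral_pos_iff_support_of_nonneg_ae (Filter.Eventually.of_forall hdnn) hdint]
    apply lt_of_lt_of_le hp
    apply measure_mono
    intro ω hω
    have hYω : Y ω < -δ := hω
    have hY0 : Y ω ≠ 0 := by intro h; rw [h] at hYω; linarith
    rw [Function.mem_support, hdsq ω]
    have hne2 : exp (s * Y ω / 2) ≠ exp (t * Y ω / 2) := by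
      intro h
      have h2 := Real.exp_injective h
      have h3 : (s - t) * Y ω = 0 := by linarith
      rcases mul_eq_zero.1 h3 with h' | h'
      · exact hne (by linarith)
      · exact hY0 h'
    have h4 : exp (s * Y ω / 2) - exp (t * Y ω / 2) ≠ 0 := sub_ne_zero.2 hne2
    positivity
  have heq : ∫ ω, d ω = ((∫ ω, exp (s * Y ω)) + ∫ ω, exp (t * Y ω))/2
      - ∫ ω, exp ((s + t)/2 * Y ω) := by
    simp only [hd]
    rw [integral_sub h5 hintu, integral_div, integral_add hints hintt]
  rw [heq] at hdpos
  linarith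

lemma aux_master (hY : Measurable Y) (hm : ∀ ω, m ≤ Y ω)
    (hEY : (Integrable Y ∧ 0 < ∫ ω, Y ω) ∨ ¬ Integrable (fun ω => max (Y ω) 0))
    {δ : ℝ} (hδ : 0 < δ) (hp : 0 < ℙ {ω | Y ω < -δ}) :
    ∃ t' : ℝ, t' < 0 ∧ (∀ t ≤ 0, ∫ ω, exp (t' * Y ω) ≤ ∫ ω, exp (t * Y ω)) ∧
      (∫ ω, exp (t' * Y ω)) < 1 ∧ (∫ ω, Y ω * exp (t' * Y ω)) = 0 := by
  set F : ℝ → ℝ := fun s => ∫ ω, exp (s * Y ω) with hF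
  have hF0 : F 0 = 1 := by simp [hF]
  have hFpos : ∀ t ≤ 0, 0 < F t := by
    intro t ht
    exact aux_pos (aux_int hY hm ht) (fun ω => exp_pos _)
  obtain ⟨t₀, ht₀, hD₀⟩ := aux_exists_pos_deriv hY hm hEY
  -- F t₀ < 1
  have hFt₀ : F t₀ < 1 := by
    have hpt : ∀ ω, exp (t₀ * Y ω) - t₀ * (Y ω * exp (t₀ * Y ω)) ≤ 1 := by
      intro ω
      have h1 : 1 + (-t₀ * Y ω) ≤ exp (-t₀ * Y ω) := by
        have := Real.add_one_le_exp (-t₀ * Y ω); linarith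
      have h2 : exp (t₀ * Y ω) * (1 + (-t₀ * Y ω)) ≤ exp (t₀ * Y ω) * exp (-t₀ * Y ω) :=
        mul_le_mul_of_nonneg_left h1 (exp_pos _).le
      have h3 : exp (t₀ * Y ω) * exp (-t₀ * Y ω) = 1 := by
        rw [← exp_add]; ring_nf; exact exp_zero
      nlinarith
    have hint1 := aux_int hY hm ht₀.le
    have hint2 := aux_int_deriv hY hm ht₀
    have hsub : Integrable (fun ω => exp (t₀ * Y ω) - t₀ * (Y ω * exp (t₀ * Y ω))) :=
      hint1.sub (hint2.const_mul t₀)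
    have hle := integral_mono hsub (integrable_const 1) (fun ω => hpt ω)
    rw [integral_sub hint1 (hint2.const_mul t₀), integral_const_mul, integral_const] at hle
    simp only [measure_univ, probReal_univ, ENNReal.toReal_one, smul_eq_mul, one_mul] at hle
    have hle2 : F t₀ ≤ 1 + t₀ * ∫ ω, Y ω * exp (t₀ * Y ω) := by
      simp only [hF]; linarith
    nlinarith
  set p : ℝ := (ℙ {ω | Y ω < -δ}).toReal with hpdef
  have hppos : 0 < p := ENNReal.toReal_pos hp.ne' (measure_ne_top _ _)
  set T : ℝ := min t₀ (-(Real.log (F t₀ / p) + 1)/δ) with hT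
  have hTt₀ : T ≤ t₀ := min_le_left _ _
  have hT0 : T < 0 := lt_of_le_of_lt hTt₀ ht₀
  have hTbig : ∀ t ≤ T, F t₀ < F t := by
    intro t htT
    have ht0 : t < 0 := lt_of_le_of_lt htT hT0
    have hlb := aux_lower hY hm hδ ht0
    have key : F t₀ < exp (-t * δ) * p := by
      have h1 : -t * δ ≥ Real.log (F t₀ / p) + 1 := by
        have h2 : t ≤ -(Real.log (F t₀ / p) + 1)/δ := le_trans htT (min_le_right _ _)
        have := mul_le_mul_of_nonneg_right h2 hδ.le
        rw [div_mul_cancel₀ _ hδ.ne'] at this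
        nlinarith
      have h3 : Real.log (F t₀ / p) < -t * δ := by linarith
      have hFp : 0 < F t₀ / p := div_pos (hFpos t₀ ht₀.le) hppos
      have h4 : F t₀ / p < exp (-t * δ) := by
        rw [← Real.exp_log hFp]; exact exp_lt_exp.2 h3
      calc F t₀ = (F t₀ / p) * p := (div_mul_cancel₀ _ hppos.ne').symm
        _ < exp (-t * δ) * p := mul_lt_mul_of_pos_right h4 hppos
    rw [← hpdef] at hlb
    exact lt_of_lt_of_le key hlb
  -- compact minimum
  have hcont : ContinuousOn F (Set.Icc T 0) := aux_contOn hY hm hT0.le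
  obtain ⟨t', ht'mem, ht'min⟩ := (isCompact_Icc).exists_isMinOn
    ⟨0, Set.right_mem_Icc.2 hT0.le⟩ hcont
  have ht'0le : t' ≤ 0 := ht'mem.2
  have hmin : ∀ t ≤ 0, F t' ≤ F t := by
    intro t ht
    rcases le_or_gt T t with h | h
    · exact ht'min (Set.mem_Icc.2 ⟨h, ht⟩)
    · exact le_of_lt (lt_of_le_of_lt (ht'min (Set.mem_Icc.2 ⟨hTt₀, ht₀.le⟩))
        (hTbig t h.le))
  have hFt' : F t' < 1 := lt_of_le_of_lt (ht'min (Set.mem_Icc.2 ⟨hTt₀, ht₀.le⟩)) hFt₀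
  have ht'neg : t' < 0 := by
    rcases lt_or_eq_of_le ht'0le with h | h
    · exact h
    · exfalso; rw [h, hF0] at hFt'; exact lt_irrefl _ hFt'
  have ht'T : T < t' := by
    rcases lt_or_eq_of_le ht'mem.1 with h | h
    · exact h
    · exfalso
      have h1 := hTbig t' (le_of_eq h.symm)
      have h2 : F t' ≤ F t₀ := ht'min (Set.mem_Icc.2 ⟨hTt₀, ht₀.le⟩)
      linarith
  -- derivative zero
  have hder := aux_hasDerivAt hY hm ht'neg
  have hloc : IsLocalMin F t' := by
    have hmem : Set.Ioo T 0 ∈ nhds t' := Ioo_mem_nhds ht'T ht'neg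
    apply Filter.eventually_of_mem hmem
    intro x hx
    exact ht'min (Set.mem_Icc.2 ⟨hx.1.le, hx.2.le⟩)
  have hD0 : (∫ ω, Y ω * exp (t' * Y ω)) = 0 := hloc.hasDerivAt_eq_zero hder
  exact ⟨t', ht'neg, hmin, hFt', hD0⟩


theorem stmt12core {Ω : Type*} [MeasureSpace Ω] [IsProbabilityMeasure (ℙ : Measure Ω)]
    (Z : Ω → ℝ) (hZ : Measurable Z) (c m : ℝ) (hm : ∀ ω, m ≤ Z ω + c)
    (hEY : (Integrable (fun ω => Z ω + c) ∧ 0 < ∫ ω, (Z ω + c)) ∨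
      ¬ Integrable (fun ω => max (Z ω + c) 0))
    (δ : ℝ) (hδ : 0 < δ) (hp : 0 < ℙ {ω | Z ω + c < -δ}) :
    (⨆ t : ℝ,
        (if Integrable (fun ω => Real.exp (t * Z ω))
         then (((-c) * t - Real.log (∫ ω, Real.exp (t * Z ω)) : ℝ) : EReal)
         else (⊥ : EReal))) =
      (⨆ t ∈ Set.Iio (0 : ℝ),
        (if Integrable (fun ω => Real.exp (t * Z ω))
         then (((-c) * t - Real.log (∫ ω, Real.exp (t * Z ω)) : ℝ) : EReal)
         else (⊥ : EReal))) ∧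
    (∃! t' : ℝ, t' < 0 ∧
      (∀ t : ℝ,
        (if Integrable (fun ω => Real.exp (t * Z ω))
         then (((-c) * t - Real.log (∫ ω, Real.exp (t * Z ω)) : ℝ) : EReal)
         else (⊥ : EReal)) ≤
        (((-c) * t' - Real.log (∫ ω, Real.exp (t' * Z ω)) : ℝ) : EReal)) ∧
      deriv (fun s : ℝ => (-c) * s - Real.log (∫ ω, Real.exp (s * Z ω))) t' = 0) := by
  have hY : Measurable (fun ω => Z ω + c) := hZ.add_const c
  set Y : Ω → ℝ := fun ω => Z ω + c with hYdef
  set FY : ℝ → ℝ := fun s => ∫ ω, exp (s * Y ω) with hFYdef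
  set G : ℝ → ℝ := fun s => (-c) * s - Real.log (∫ ω, Real.exp (s * Z ω)) with hGdef
  -- integrability transfer
  have hiff : ∀ t : ℝ, Integrable (fun ω => exp (t * Z ω)) ↔
      Integrable (fun ω => exp (t * Y ω)) := by
    intro t
    constructor
    · intro h
      refine (h.const_mul (exp (t * c))).congr
        (Filter.Eventually.of_forall fun ω => ?_)
      show exp (t * c) * exp (t * Z ω) = exp (t * Y ω)
      rw [← exp_add]; congr 1; simp only [hYdef]; ring
    · intro h
      refine (h.const_mul (exp (-(t * c)))).congr
        (Filter.Eventually.of_forall fun ω => ?_)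
      show exp (-(t * c)) * exp (t * Y ω) = exp (t * Z ω)
      rw [← exp_add]; congr 1; simp only [hYdef]; ring
  have hIZneg : ∀ s : ℝ, s ≤ 0 → Integrable (fun ω => exp (s * Z ω)) :=
    fun s hs => (hiff s).2 (aux_int hY hm hs)
  -- G t = - log (FY t) when integrable
  have rel2 : ∀ t : ℝ, Integrable (fun ω => exp (t * Z ω)) → G t = -Real.log (FY t) := by
    intro t h
    have hpos1 : 0 < ∫ ω, exp (t * Z ω) := aux_pos h (fun ω => exp_pos _)
    have heq : FY t = exp (t * c) * ∫ ω, exp (t * Z ω) := by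
      simp only [hFYdef]
      rw [← integral_const_mul]
      apply integral_congr_ae (Filter.Eventually.of_forall fun ω => ?_)
      show exp (t * Y ω) = exp (t * c) * exp (t * Z ω)
      rw [← exp_add]; congr 1; simp only [hYdef]; ring
    simp only [hGdef]
    rw [heq, Real.log_mul (exp_ne_zero _) hpos1.ne', Real.log_exp]
    ring
  have hFYpos : ∀ t : ℝ, t ≤ 0 → 0 < FY t :=
    fun t ht => aux_pos (aux_int hY hm ht) (fun ω => exp_pos _)
  -- master
  obtain ⟨t', ht'neg, hmin, hFt'lt1, hD0⟩ := aux_master hY hm hEY hδ hp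
  have hIt' : Integrable (fun ω => exp (t' * Z ω)) := hIZneg t' ht'neg.le
  -- the global bound (real version)
  have KEY1R : ∀ t : ℝ, Integrable (fun ω => exp (t * Z ω)) → G t ≤ G t' := by
    intro t hI
    rw [rel2 t hI, rel2 t' hIt']
    apply neg_le_neg
    apply Real.log_le_log (hFYpos t' ht'neg.le)
    rcases le_or_gt t 0 with h | h
    · exact hmin t h
    · have h1 : 1 ≤ FY t := aux_ge_one hY hm hEY h ((hiff t).1 hI)
      have h2 : FY t' < 1 := hFt'lt1
      linarith
  have boundE : ∀ t : ℝ,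
      (if Integrable (fun ω => Real.exp (t * Z ω))
       then (((-c) * t - Real.log (∫ ω, Real.exp (t * Z ω)) : ℝ) : EReal)
       else (⊥ : EReal)) ≤ ((G t' : ℝ) : EReal) := by
    intro t
    by_cases hI : Integrable (fun ω => exp (t * Z ω))
    · rw [if_pos hI]
      exact EReal.coe_le_coe_iff.2 (KEY1R t hI)
    · rw [if_neg hI]; exact bot_le
  have hatt : (((-c) * t' - Real.log (∫ ω, Real.exp (t' * Z ω)) : ℝ) : EReal)
      = ((G t' : ℝ) : EReal) := rfl
  -- derivative fact
  have hFd : HasDerivAt FY 0 t' := by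
    have := aux_hasDerivAt hY hm ht'neg
    rwa [hD0] at this
  have KEY3 : deriv G t' = 0 := by
    have hEq : ∀ s ∈ Set.Iio (0:ℝ), G s = -Real.log (FY s) :=
      fun s hs => rel2 s (hIZneg s (le_of_lt hs))
    have hev : G =ᶠ[nhds t'] fun s => -Real.log (FY s) :=
      Filter.eventuallyEq_of_mem (Iio_mem_nhds ht'neg) hEq
    have hlog : HasDerivAt (fun s => -Real.log (FY s)) (-(0 / FY t')) t' :=
      (hFd.log (hFYpos t' ht'neg.le).ne').neg
    rw [hev.deriv_eq, hlog.deriv]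
    simp
  constructor
  · apply le_antisymm
    · apply iSup_le
      intro t
      refine le_trans (boundE t) ?_
      have h2 : (((-c) * t' - Real.log (∫ ω, Real.exp (t' * Z ω)) : ℝ) : EReal)
          ≤ ⨆ t ∈ Set.Iio (0:ℝ),
            (if Integrable (fun ω => Real.exp (t * Z ω))
             then (((-c) * t - Real.log (∫ ω, Real.exp (t * Z ω)) : ℝ) : EReal)
             else (⊥ : EReal)) := by
        refine le_trans ?_ (le_biSup _ (show t' ∈ Set.Iio (0:ℝ) from ht'neg))
        rw [if_pos hIt']
      exact h2
    · exact iSup₂_le fun t _ => le_iSup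
        (fun t => (if Integrable (fun ω => Real.exp (t * Z ω))
          then (((-c) * t - Real.log (∫ ω, Real.exp (t * Z ω)) : ℝ) : EReal)
          else (⊥ : EReal))) t
  · refine ⟨t', ⟨ht'neg, fun t => boundE t, KEY3⟩, ?_⟩
    rintro y ⟨hy0, hybnd, -⟩
    by_contra hne
    have hIy : Integrable (fun ω => exp (y * Z ω)) := hIZneg y hy0.le
    have h1 : G t' ≤ G y := by
      have h := hybnd t'
      rw [if_pos hIt'] at h
      exact EReal.coe_le_coe_iff.1 h
    have h2 : G y = G t' := le_antisymm (KEY1R y hIy) h1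
    have hFeq : FY y = FY t' := by
      have ha1 := rel2 y hIy
      have ha2 := rel2 t' hIt'
      have hl : Real.log (FY y) = Real.log (FY t') := by
        rw [ha1, ha2] at h2; linarith
      calc FY y = exp (Real.log (FY y)) := (Real.exp_log (hFYpos y hy0.le)).symm
        _ = exp (Real.log (FY t')) := by rw [hl]
        _ = FY t' := Real.exp_log (hFYpos t' ht'neg.le)
    have hstrict := aux_strict hY hm hδ hp hy0.le ht'neg.le hne
    have humin := hmin ((y + t')/2) (by linarith)
    simp only [hFYdef] at hFeq
    linarith
end aux

set_option maxHeartbeats 1000000 in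
/-- For 0 < b < 1 and a > 0 such that the support of X meets (a₁(a), a₂(a)), and X
with continuous distribution and E[X] = 0 or E[X²] = ∞:
sup_{t∈ℝ} g(t,a) = sup_{t<0} g(t,a) and the supremum is attained at a unique
finite t̃ < 0 with ∂g/∂t(t̃) = 0. -/
theorem stmt12 {Ω : Type*} [MeasureSpace Ω] [IsProbabilityMeasure (ℙ : Measure Ω)]
    (X : Ω → ℝ) (hX : Measurable X)
    (hcont : ∀ x : ℝ, ℙ {ω | X ω = x} = 0)
    (hmom : (∫ ω, X ω) = 0 ∨ ¬ Integrable (fun ω => (X ω) ^ 2))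
    (a b : ℝ) (ha : 0 < a) (hb : 0 < b) (hb1 : b < 1)
    (hU : (Set.Ioo
        (min (a / b ^ 2 * (1 - Real.sqrt (1 - b ^ 2)))
             (a / b ^ 2 * (1 + Real.sqrt (1 - b ^ 2))))
        (max (a / b ^ 2 * (1 - Real.sqrt (1 - b ^ 2)))
             (a / b ^ 2 * (1 + Real.sqrt (1 - b ^ 2)))) ∩
      {x : ℝ | ∀ ε > (0 : ℝ), 0 < ℙ {ω | X ω ∈ Set.Ioo (x - ε) (x + ε)}}).Nonempty) :
    (⨆ t : ℝ,
        (if Integrable (fun ω => Real.exp (t * ((X ω) ^ 2 - (2 * a / b ^ 2) * X ω)))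
         then (((-(a ^ 2 / b ^ 2)) * t -
            Real.log (∫ ω, Real.exp (t * ((X ω) ^ 2 - (2 * a / b ^ 2) * X ω))) : ℝ) : EReal)
         else (⊥ : EReal))) =
      (⨆ t ∈ Set.Iio (0 : ℝ),
        (if Integrable (fun ω => Real.exp (t * ((X ω) ^ 2 - (2 * a / b ^ 2) * X ω)))
         then (((-(a ^ 2 / b ^ 2)) * t -
            Real.log (∫ ω, Real.exp (t * ((X ω) ^ 2 - (2 * a / b ^ 2) * X ω))) : ℝ) : EReal)
         else (⊥ : EReal))) ∧
    (∃! t' : ℝ, t' < 0 ∧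
      (∀ t : ℝ,
        (if Integrable (fun ω => Real.exp (t * ((X ω) ^ 2 - (2 * a / b ^ 2) * X ω)))
         then (((-(a ^ 2 / b ^ 2)) * t -
            Real.log (∫ ω, Real.exp (t * ((X ω) ^ 2 - (2 * a / b ^ 2) * X ω))) : ℝ) : EReal)
         else (⊥ : EReal)) ≤
        (((-(a ^ 2 / b ^ 2)) * t' -
            Real.log (∫ ω, Real.exp (t' * ((X ω) ^ 2 - (2 * a / b ^ 2) * X ω))) : ℝ) : EReal)) ∧
      deriv (fun s : ℝ => (-(a ^ 2 / b ^ 2)) * s -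
          Real.log (∫ ω, Real.exp (s * ((X ω) ^ 2 - (2 * a / b ^ 2) * X ω)))) t' = 0) := by
  have hb0 : (b:ℝ) ≠ 0 := hb.ne'
  have hb2 : (0:ℝ) < b ^ 2 := by positivity
  have hab2 : (0:ℝ) < a / b ^ 2 := div_pos ha hb2
  have hc : (0:ℝ) < a ^ 2 / b ^ 2 := by positivity
  -- Z and Y
  have hZmeas : Measurable (fun ω => (X ω) ^ 2 - (2 * a / b ^ 2) * X ω) :=
    (hX.pow_const 2).sub (hX.const_mul (2 * a / b ^ 2))
  have e1 : (a / b ^ 2) ^ 2 = a ^ 2 / b ^ 4 := by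
    field_simp
  have e2 : 2 * a / b ^ 2 = 2 * (a / b ^ 2) := by ring
  have hm : ∀ ω, (a ^ 2 / b ^ 2 - a ^ 2 / b ^ 4) ≤
      ((X ω) ^ 2 - (2 * a / b ^ 2) * X ω) + a ^ 2 / b ^ 2 := by
    intro ω
    have h := sq_nonneg (X ω - a / b ^ 2)
    nlinarith [h, e1, e2]
  -- the quadratic identity
  have hs2 : Real.sqrt (1 - b ^ 2) ^ 2 = 1 - b ^ 2 :=
    Real.sq_sqrt (by nlinarith)
  set s0 : ℝ := Real.sqrt (1 - b ^ 2) with hs0def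
  have hs0 : 0 < s0 := Real.sqrt_pos.2 (by nlinarith)
  set a1 : ℝ := a / b ^ 2 * (1 - s0) with ha1def
  set a2 : ℝ := a / b ^ 2 * (1 + s0) with ha2def
  clear_value s0
  have ha12 : a1 < a2 := by
    rw [ha1def, ha2def]
    apply mul_lt_mul_of_pos_left _ hab2
    linarith
  have hfact : ∀ x : ℝ, x ^ 2 - (2 * a / b ^ 2) * x + a ^ 2 / b ^ 2
      = (x - a1) * (x - a2) := by
    intro x
    have h9 : (x - a1) * (x - a2)
        = x ^ 2 - (2 * a / b ^ 2) * x + (a / b ^ 2) ^ 2 * (1 - s0 ^ 2) := by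
      rw [ha1def, ha2def]; ring
    have e3 : (a / b ^ 2) ^ 2 * (1 - s0 ^ 2) = a ^ 2 / b ^ 2 := by
      rw [hs2]
      field_simp
      ring
    rw [h9, e3]
  clear_value a1 a2
  -- positive mass below -δ
  obtain ⟨x₀, hx₀I, hx₀P⟩ := hU
  rw [min_eq_left ha12.le, max_eq_right ha12.le] at hx₀I
  set l : ℝ := x₀ - a1 with hldef
  set r : ℝ := a2 - x₀ with hrdef
  clear_value l r
  have hl : 0 < l := by rw [hldef]; linarith [hx₀I.1]
  have hr : 0 < r := by rw [hrdef]; linarith [hx₀I.2]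
  set ε : ℝ := min l r / 2 with hεdef
  clear_value ε
  have hε : 0 < ε := by rw [hεdef]; positivity
  have hεl : ε ≤ l / 2 := by
    rw [hεdef]; linarith [min_le_left l r]
  have hεr : ε ≤ r / 2 := by
    rw [hεdef]; linarith [min_le_right l r]
  set δ : ℝ := l * r / 8 with hδdef
  clear_value δ
  have hδ : 0 < δ := by rw [hδdef]; positivity
  have hsub : {ω | X ω ∈ Set.Ioo (x₀ - ε) (x₀ + ε)} ⊆
      {ω | ((X ω) ^ 2 - (2 * a / b ^ 2) * X ω) + a ^ 2 / b ^ 2 < -δ} := by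
    intro ω hω
    obtain ⟨h1, h2⟩ := hω
    show ((X ω) ^ 2 - (2 * a / b ^ 2) * X ω) + a ^ 2 / b ^ 2 < -δ
    have hfx := hfact (X ω)
    have hA : l / 2 < X ω - a1 := by
      rw [hldef] at hεl ⊢
      linarith
    have hB : r / 2 < a2 - X ω := by
      rw [hrdef] at hεr ⊢
      linarith
    have : (X ω - a1) * (a2 - X ω) > (l/2) * (r/2) :=
      mul_lt_mul'' hA hB (by positivity) (by positivity)
    have hprod : (X ω - a1) * (X ω - a2) < -(l * r / 4) := by nlinarith
    rw [hδdef]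
    nlinarith
  have hp : 0 < ℙ {ω | ((X ω) ^ 2 - (2 * a / b ^ 2) * X ω) + a ^ 2 / b ^ 2 < -δ} :=
    lt_of_lt_of_le (hx₀P ε hε) (measure_mono hsub)
  -- mean condition
  have hEY : (Integrable (fun ω => ((X ω) ^ 2 - (2 * a / b ^ 2) * X ω) + a ^ 2 / b ^ 2) ∧
      0 < ∫ ω, (((X ω) ^ 2 - (2 * a / b ^ 2) * X ω) + a ^ 2 / b ^ 2)) ∨
      ¬ Integrable (fun ω => max (((X ω) ^ 2 - (2 * a / b ^ 2) * X ω) + a ^ 2 / b ^ 2) 0) := by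
    by_cases hX2 : Integrable (fun ω => (X ω) ^ 2)
    · left
      have hXint : Integrable X := by
        refine Integrable.mono' ((integrable_const 1).add hX2)
          hX.aestronglyMeasurable (Filter.Eventually.of_forall fun ω => ?_)
        show ‖X ω‖ ≤ 1 + (X ω) ^ 2
        rw [Real.norm_eq_abs]
        nlinarith [sq_nonneg (|X ω| - 1), sq_abs (X ω)]
      have hmean : (∫ ω, X ω) = 0 := hmom.resolve_right (not_not_intro hX2)
      have hZint : Integrable (fun ω => (X ω) ^ 2 - (2 * a / b ^ 2) * X ω) :=
        hX2.sub (hXint.const_mul (2 * a / b ^ 2))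
      refine ⟨hZint.add (integrable_const _), ?_⟩
      rw [integral_add hZint (integrable_const _),
        integral_sub hX2 (hXint.const_mul _), integral_const_mul, hmean,
        integral_const]
      simp only [measure_univ, probReal_univ, ENNReal.toReal_one, smul_eq_mul, one_mul, mul_zero, sub_zero]
      have h2 : (0:ℝ) ≤ ∫ ω, (X ω) ^ 2 := by
        apply integral_nonneg; intro ω; exact sq_nonneg _
      linarith
    · right
      intro hplus
      apply hX2
      have hQint : Integrable (fun ω => (X ω - a / b ^ 2) ^ 2) := by
        refine Integrable.mono' (hplus.sub (integrable_const (a ^ 2 / b ^ 2 - a ^ 2 / b ^ 4)))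
          ((hX.sub_const _).pow_const 2).aestronglyMeasurable
          (Filter.Eventually.of_forall fun ω => ?_)
        show ‖(X ω - a / b ^ 2) ^ 2‖ ≤
          max (((X ω) ^ 2 - (2 * a / b ^ 2) * X ω) + a ^ 2 / b ^ 2) 0
            - (a ^ 2 / b ^ 2 - a ^ 2 / b ^ 4)
        rw [Real.norm_eq_abs, abs_of_nonneg (sq_nonneg _)]
        have hle := le_max_left (((X ω) ^ 2 - (2 * a / b ^ 2) * X ω) + a ^ 2 / b ^ 2) 0
        nlinarith [e1, e2]
      refine Integrable.mono' ((hQint.const_mul 2).add (integrable_const (2 * (a / b ^ 2) ^ 2)))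
        (hX.pow_const 2).aestronglyMeasurable
        (Filter.Eventually.of_forall fun ω => ?_)
      show ‖(X ω) ^ 2‖ ≤ 2 * (X ω - a / b ^ 2) ^ 2 + 2 * (a / b ^ 2) ^ 2
      rw [Real.norm_eq_abs, abs_of_nonneg (sq_nonneg _)]
      nlinarith [sq_nonneg (X ω - 2 * (a / b ^ 2))]
  exact stmt12core (fun ω => (X ω) ^ 2 - (2 * a / b ^ 2) * X ω) hZmeas
    (a ^ 2 / b ^ 2) (a ^ 2 / b ^ 2 - a ^ 2 / b ^ 4) hm hEY δ hδ hp
end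

section
/- For fixed 0 < b < 1, let g(t,a) = −(a²/b²)t − log E[exp(t(X² − (2a/b²)X))]. Then lim_{a→∞} sup_{t<0} g(t,a) = ∞ and lim_{a→0⁺} sup_{t<0} g(t,a) = ∞. -/
set_option maxHeartbeats 1000000


open scoped ProbabilityTheory
open MeasureTheory Real Filter

private lemma expo_eq (b a k x : ℝ) (hb : b ≠ 0) (ha : a ≠ 0) :
    (-(k / a ^ 2)) * (x ^ 2 - (2 * a / b ^ 2) * x) = k / b ^ 4 - (k / a ^ 2) * (x - a / b ^ 2) ^ 2 := by
  field_simp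
  ring

private lemma expo_le (b a k x : ℝ) (hb : 0 < b) (ha : 0 < a) (hk : 0 ≤ k) :
    (-(k / a ^ 2)) * (x ^ 2 - (2 * a / b ^ 2) * x) ≤ k / b ^ 4 := by
  rw [expo_eq b a k x hb.ne' ha.ne']
  have h : 0 ≤ (k / a ^ 2) * (x - a / b ^ 2) ^ 2 := mul_nonneg (by positivity) (sq_nonneg _)
  linarith

private lemma main_aux {Ω : Type*} [MeasureSpace Ω] [IsProbabilityMeasure (ℙ : Measure Ω)]
    (X : Ω → ℝ) (b : ℝ) (hb : 0 < b) (l : Filter ℝ)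
    (hpos : ∀ᶠ a in l, 0 < a)
    (hDCT : ∀ k : ℝ, 0 < k → ∀ᶠ a in l,
      (∫ ω, Real.exp ((-(k / a ^ 2)) * ((X ω) ^ 2 - (2 * a / b ^ 2) * X ω))) < 2) :
    Tendsto (fun a : ℝ => ⨆ t ∈ Set.Iio (0 : ℝ),
        (((-(a ^ 2 / b ^ 2)) * t -
          Real.log (∫ ω, Real.exp (t * ((X ω) ^ 2 - (2 * a / b ^ 2) * X ω))) : ℝ) : EReal))
      l (nhds (⊤ : EReal)) := by
  rw [EReal.tendsto_nhds_top_iff_real]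
  intro M
  have hk : (0:ℝ) < b ^ 2 * (|M| + 2) := by positivity
  filter_upwards [hpos, hDCT _ hk] with a ha hIa
  set k : ℝ := b ^ 2 * (|M| + 2) with hkdef
  have hI0 : 0 ≤ ∫ ω, Real.exp ((-(k / a ^ 2)) * ((X ω) ^ 2 - (2 * a / b ^ 2) * X ω)) :=
    integral_nonneg fun ω => (Real.exp_pos _).le
  have hlog : Real.log (∫ ω, Real.exp ((-(k / a ^ 2)) * ((X ω) ^ 2 - (2 * a / b ^ 2) * X ω))) < 1 := by
    rcases hI0.eq_or_lt with h | h
    · rw [← h, Real.log_zero]; norm_num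
    · exact (Real.log_lt_iff_lt_exp h).mpr (hIa.trans_le (by nlinarith [Real.add_one_le_exp (1:ℝ)]))
  have ht0 : (-(k / a ^ 2)) ∈ Set.Iio (0:ℝ) := by
    have : 0 < k / a ^ 2 := by positivity
    simpa using this
  have key : (M : EReal) < (((-(a ^ 2 / b ^ 2)) * (-(k / a ^ 2)) -
      Real.log (∫ ω, Real.exp ((-(k / a ^ 2)) * ((X ω) ^ 2 - (2 * a / b ^ 2) * X ω))) : ℝ) : EReal) := by
    rw [EReal.coe_lt_coe_iff]
    have e1 : (-(a ^ 2 / b ^ 2)) * (-(k / a ^ 2)) = |M| + 2 := by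
      rw [hkdef]
      field_simp
    rw [e1]
    have h2 := le_abs_self M
    linarith
  exact key.trans_le (le_iSup₂ (f := fun t (_ : t ∈ Set.Iio (0:ℝ)) =>
    (((-(a ^ 2 / b ^ 2)) * t -
      Real.log (∫ ω, Real.exp (t * ((X ω) ^ 2 - (2 * a / b ^ 2) * X ω))) : ℝ) : EReal)) _ ht0)

private lemma dct_atTop {Ω : Type*} [MeasureSpace Ω] [IsProbabilityMeasure (ℙ : Measure Ω)]
    (X : Ω → ℝ) (hX : Measurable X) (b k : ℝ) (hb : 0 < b) (hk : 0 < k) :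
    ∀ᶠ a in atTop, (∫ ω, Real.exp ((-(k / a ^ 2)) * ((X ω) ^ 2 - (2 * a / b ^ 2) * X ω))) < 2 := by
  have h : Tendsto (fun a : ℝ => ∫ ω, Real.exp ((-(k / a ^ 2)) * ((X ω) ^ 2 - (2 * a / b ^ 2) * X ω)))
      atTop (nhds (∫ _ω : Ω, (1:ℝ))) := by
    apply tendsto_integral_filter_of_dominated_convergence (fun _ => Real.exp (k / b ^ 4))
    · exact Eventually.of_forall fun a =>
        (((hX.pow_const 2).sub (measurable_const.mul hX)).const_mul _).exp.aestronglyMeasurable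
    · filter_upwards [eventually_gt_atTop (0:ℝ)] with a ha
      refine Eventually.of_forall fun ω => ?_
      rw [Real.norm_eq_abs, abs_of_pos (Real.exp_pos _)]
      exact Real.exp_le_exp.mpr (expo_le b a k (X ω) hb ha hk.le)
    · exact integrable_const _
    · refine Eventually.of_forall fun ω => ?_
      have hx : Tendsto (fun a : ℝ => (-(k / a ^ 2)) * ((X ω) ^ 2 - (2 * a / b ^ 2) * X ω))
          atTop (nhds 0) := by
        have t1 : Tendsto (fun a : ℝ =>
            (-(k * (X ω) ^ 2)) * (a ^ 2)⁻¹ + (2 * k * (X ω) / b ^ 2) * a⁻¹) atTop (nhds 0) := by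
          have h1 : Tendsto (fun a : ℝ => (a ^ 2)⁻¹) atTop (nhds 0) :=
            (tendsto_pow_atTop two_ne_zero).inv_tendsto_atTop
          have h2 : Tendsto (fun a : ℝ => a⁻¹) atTop (nhds 0) := tendsto_inv_atTop_zero
          simpa using (h1.const_mul (-(k * (X ω) ^ 2))).add (h2.const_mul (2 * k * (X ω) / b ^ 2))
        refine Tendsto.congr' ?_ t1
        filter_upwards [eventually_gt_atTop (0:ℝ)] with a ha
        field_simp
        ring
      have h3 : Tendsto (fun a : ℝ =>
          Real.exp ((-(k / a ^ 2)) * ((X ω) ^ 2 - (2 * a / b ^ 2) * X ω))) atTop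
          (nhds (Real.exp 0)) := (Real.continuous_exp.tendsto 0).comp hx
      rw [Real.exp_zero] at h3
      exact h3
  have hlt : (∫ _ω : Ω, (1:ℝ)) < 2 := by simp
  exact h.eventually_lt_const hlt

private lemma dct_zero {Ω : Type*} [MeasureSpace Ω] [IsProbabilityMeasure (ℙ : Measure Ω)]
    (X : Ω → ℝ) (hX : Measurable X) (b k : ℝ) (hb : 0 < b) (hk : 0 < k) :
    ∀ᶠ a in nhdsWithin 0 (Set.Ioi 0),
      (∫ ω, Real.exp ((-(k / a ^ 2)) * ((X ω) ^ 2 - (2 * a / b ^ 2) * X ω))) < 2 := by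
  classical
  set f : Ω → ℝ := Set.indicator (X ⁻¹' {0}) (fun _ => 1) with hf
  have hfint : Integrable f ℙ :=
    (integrable_const (1:ℝ)).indicator (hX (measurableSet_singleton 0))
  have hfle : ∀ ω, f ω ≤ 1 := by
    intro ω
    by_cases hω : ω ∈ X ⁻¹' {0} <;> simp [hf, hω]
  have h : Tendsto (fun a : ℝ => ∫ ω, Real.exp ((-(k / a ^ 2)) * ((X ω) ^ 2 - (2 * a / b ^ 2) * X ω)))
      (nhdsWithin 0 (Set.Ioi 0)) (nhds (∫ ω, f ω)) := by
    apply tendsto_integral_filter_of_dominated_convergence (fun _ => Real.exp (k / b ^ 4))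
    · exact Eventually.of_forall fun a =>
        (((hX.pow_const 2).sub (measurable_const.mul hX)).const_mul _).exp.aestronglyMeasurable
    · filter_upwards [eventually_mem_nhdsWithin] with a ha
      refine Eventually.of_forall fun ω => ?_
      rw [Real.norm_eq_abs, abs_of_pos (Real.exp_pos _)]
      exact Real.exp_le_exp.mpr (expo_le b a k (X ω) hb ha hk.le)
    · exact integrable_const _
    · refine Eventually.of_forall fun ω => ?_
      by_cases hx : X ω = 0
      · have hfω : f ω = 1 := by simp [hf, hx]
        rw [hfω]
        have heq : (fun a : ℝ => Real.exp ((-(k / a ^ 2)) * ((X ω) ^ 2 - (2 * a / b ^ 2) * X ω)))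
            = fun _ => (1:ℝ) := by
          funext a; simp [hx]
        rw [heq]
        exact tendsto_const_nhds
      · have hfω : f ω = 0 := by simp [hf, hx]
        rw [hfω]
        have hx2 : 0 < (X ω) ^ 2 := lt_of_le_of_ne (sq_nonneg _) (Ne.symm (pow_ne_zero 2 hx))
        have h1 : Tendsto (fun a : ℝ => a ^ 2) (nhdsWithin 0 (Set.Ioi 0)) (nhdsWithin 0 (Set.Ioi 0)) := by
          rw [tendsto_nhdsWithin_iff]
          constructor
          · simpa using (((continuous_pow 2).tendsto (0:ℝ)).mono_left nhdsWithin_le_nhds)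
          · exact eventually_mem_nhdsWithin.mono fun a ha => Set.mem_Ioi.mpr (pow_pos ha 2)
        have h2 : Tendsto (fun a : ℝ => (a ^ 2)⁻¹) (nhdsWithin 0 (Set.Ioi 0)) atTop :=
          tendsto_inv_nhdsGT_zero.comp h1
        have h3 : Tendsto (fun a : ℝ => k / a ^ 2) (nhdsWithin 0 (Set.Ioi 0)) atTop := by
          simpa [div_eq_mul_inv] using (tendsto_const_mul_atTop_of_pos hk).mpr h2
        have h4 : Tendsto (fun a : ℝ => (X ω - a / b ^ 2) ^ 2) (nhdsWithin 0 (Set.Ioi 0))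
            (nhds ((X ω) ^ 2)) := by
          have c1 : Continuous fun a : ℝ => (X ω - a / b ^ 2) ^ 2 := by continuity
          simpa using (c1.tendsto (0:ℝ)).mono_left nhdsWithin_le_nhds
        have h5 : Tendsto (fun a : ℝ => (k / a ^ 2) * (X ω - a / b ^ 2) ^ 2)
            (nhdsWithin 0 (Set.Ioi 0)) atTop := h3.atTop_mul_pos hx2 h4
        have h6 : Tendsto (fun a : ℝ => k / b ^ 4 + -((k / a ^ 2) * (X ω - a / b ^ 2) ^ 2))
            (nhdsWithin 0 (Set.Ioi 0)) atBot :=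
          tendsto_atBot_add_const_left _ _ (tendsto_neg_atTop_atBot.comp h5)
        have h7 : Tendsto (fun a : ℝ => (-(k / a ^ 2)) * ((X ω) ^ 2 - (2 * a / b ^ 2) * X ω))
            (nhdsWithin 0 (Set.Ioi 0)) atBot := by
          refine Tendsto.congr' ?_ h6
          filter_upwards [eventually_mem_nhdsWithin] with a ha
          rw [expo_eq b a k (X ω) hb.ne' (ne_of_gt ha)]
          ring
        exact Real.tendsto_exp_atBot.comp h7
  have hlt : (∫ ω, f ω) < 2 := by
    have h1 : (∫ ω, f ω) ≤ ∫ _ω : Ω, (1:ℝ) := integral_mono hfint (integrable_const _) hfle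
    have h2 : (∫ _ω : Ω, (1:ℝ)) = 1 := by simp
    linarith
  exact h.eventually_lt_const hlt

/-- For 0 < b < 1, sup_{t<0} g(t,a;b) → ∞ both as a → ∞ and as a → 0⁺. -/
theorem stmt13 {Ω : Type*} [MeasureSpace Ω] [IsProbabilityMeasure (ℙ : Measure Ω)]
    (X : Ω → ℝ) (hX : Measurable X) (b : ℝ) (hb : 0 < b) (hb1 : b < 1) :
    Tendsto (fun a : ℝ => ⨆ t ∈ Set.Iio (0 : ℝ),
        (((-(a ^ 2 / b ^ 2)) * t -
          Real.log (∫ ω, Real.exp (t * ((X ω) ^ 2 - (2 * a / b ^ 2) * X ω))) : ℝ) : EReal))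
      atTop (nhds (⊤ : EReal)) ∧
    Tendsto (fun a : ℝ => ⨆ t ∈ Set.Iio (0 : ℝ),
        (((-(a ^ 2 / b ^ 2)) * t -
          Real.log (∫ ω, Real.exp (t * ((X ω) ^ 2 - (2 * a / b ^ 2) * X ω))) : ℝ) : EReal))
      (nhdsWithin 0 (Set.Ioi 0)) (nhds (⊤ : EReal)) := by
  constructor
  · exact main_aux X b hb atTop (eventually_gt_atTop 0)
      (fun k hk => dct_atTop X hX b k hb hk)
  · exact main_aux X b hb (nhdsWithin 0 (Set.Ioi 0))
      (eventually_mem_nhdsWithin.mono fun a ha => ha)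
      (fun k hk => dct_zero X hX b k hb hk)
end
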